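/- arXiv:2406.04336 — 7 statements merged into one kernel-verified Lean document; each statement's English description precedes it below -/
import Mathlib

section
/- For each choice of graph matrix M ∈ {adjacency matrix A, Laplacian L, normalized Laplacian L̂}: if two finite simple graphs G and H (with no isolated vertices) are EPWL-indistinguishable with respect to M, then G and H are 1-WL-indistinguishable. (EPWL is at least as expressive as 1-WL in distinguishing non-isomorphic graphs.) -/
open scoped Classical
open Matrix BigOperators

noncomputable section

namespace EPWL

/-! ### Generic node-coloring refinement with pairwise features in a type `α` -/

/-- The common nested type of round-`l` colors: `C 0 = Unit`,
`C (l+1) = C l × Multiset (C l × α)`. -/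
def Color (α : Type) : ℕ → Type
  | 0 => Unit
  | l + 1 => Color α l × Multiset (Color α l × α)

/-- The color refinement: `χ⁰(u) = ()` and
`χ^{l+1}(u) = (χ^l(u), {{(χ^l(v), f u v) : v}})`. -/
def colorFn {V : Type*} [Fintype V] {α : Type} (f : V → V → α) :
    (l : ℕ) → V → Color α l
  | 0 => fun _ => ()
  | l + 1 => fun u =>
      (colorFn f l u, Finset.univ.val.map fun v => (colorFn f l v, f u v))

/-- Two graphs (presented through their pairwise-feature functions) are
indistinguishable by the node-coloring refinement: at every round, the
multisets of node colors agree. -/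
def NodeIndist {V W : Type*} [Fintype V] [Fintype W] {α : Type}
    (f : V → V → α) (g : W → W → α) : Prop :=
  ∀ l : ℕ, Finset.univ.val.map (colorFn f l) = Finset.univ.val.map (colorFn g l)

/-- Atomic type of an ordered vertex pair: `0` if equal, `1` if adjacent,
`2` otherwise. -/
def atp {V : Type*} (G : SimpleGraph V) (u v : V) : ℕ :=
  if u = v then 0 else if G.Adj u v then 1 else 2

/-- 1-WL indistinguishability. -/
def WL1Indist {V W : Type*} [Fintype V] [Fintype W]
    (G : SimpleGraph V) (H : SimpleGraph W) : Prop :=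
  NodeIndist (atp G) (atp H)

/-! ### Graph matrices -/

/-- Real adjacency matrix. -/
def adjM {V : Type*} [Fintype V] (G : SimpleGraph V) : Matrix V V ℝ :=
  G.adjMatrix ℝ

/-- Real (diagonal) degree matrix. -/
def degM {V : Type*} [Fintype V] (G : SimpleGraph V) : Matrix V V ℝ :=
  Matrix.diagonal fun v => (G.degree v : ℝ)

/-- Laplacian matrix `L = D - A`. -/
def lapM {V : Type*} [Fintype V] (G : SimpleGraph V) : Matrix V V ℝ :=
  degM G - adjM G

/-- The diagonal matrix `D^{-1/2}`. -/
def invSqrtDegM {V : Type*} [Fintype V] (G : SimpleGraph V) : Matrix V V ℝ :=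
  Matrix.diagonal fun v => (Real.sqrt (G.degree v))⁻¹

/-- Normalized Laplacian `L̂ = D^{-1/2} L D^{-1/2}`. -/
def normLapM {V : Type*} [Fintype V] (G : SimpleGraph V) : Matrix V V ℝ :=
  invSqrtDegM G * lapM G * invSqrtDegM G

/-- Normalized adjacency matrix `Â = D^{-1/2} A D^{-1/2}`. -/
def normAdjM {V : Type*} [Fintype V] (G : SimpleGraph V) : Matrix V V ℝ :=
  invSqrtDegM G * adjM G * invSqrtDegM G

/-- The diagonal matrix `D⁻¹` of inverse degrees. -/
def invDegM {V : Type*} [Fintype V] (G : SimpleGraph V) : Matrix V V ℝ :=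
  Matrix.diagonal fun v => ((G.degree v : ℝ))⁻¹

/-- The random-walk matrix `D⁻¹ A`. -/
def rwM {V : Type*} [Fintype V] (G : SimpleGraph V) : Matrix V V ℝ :=
  invDegM G * adjM G

/-- The all-ones matrix `J`. -/
def allOnes (V : Type*) : Matrix V V ℝ := Matrix.of fun _ _ => 1

/-- A choice among the three graph matrices `A`, `L`, `L̂`. -/
inductive MatChoice | adj | lap | normLap

/-- The graph matrix associated with a choice. -/
def matOf {V : Type*} [Fintype V] (c : MatChoice) (G : SimpleGraph V) :
    Matrix V V ℝ :=
  match c with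
  | .adj => adjM G
  | .lap => lapM G
  | .normLap => normLapM G

/-! ### Spectral decompositions and the eigenspace projection invariant -/

/-- `IsSpectralDecomp M Λ P` says: `Λ` is the (finite) set of distinct
eigenvalues of the symmetric matrix `M` and, for `lam ∈ Λ`, `P lam` is the
orthogonal projection onto the eigenspace of `lam`. This is characterized
uniquely by: the `P lam` are symmetric idempotent nonzero matrices,
pairwise "orthogonal" (`P lam * P mu = 0` for `lam ≠ mu`), summing to the
identity, with `∑ lam • P lam = M`. -/
structure IsSpectralDecomp {n : Type*} [Fintype n]
    (M : Matrix n n ℝ) (Λ : Finset ℝ) (P : ℝ → Matrix n n ℝ) : Prop where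
  symm : ∀ lam ∈ Λ, (P lam)ᵀ = P lam
  idem : ∀ lam ∈ Λ, P lam * P lam = P lam
  nonzero : ∀ lam ∈ Λ, P lam ≠ 0
  orth : ∀ lam ∈ Λ, ∀ mu ∈ Λ, lam ≠ mu → P lam * P mu = 0
  sum_one : ∑ lam ∈ Λ, P lam = 1
  sum_smul : ∑ lam ∈ Λ, lam • P lam = M

/-- The eigenspace projection invariant
`𝒫^M(u,v) = {{(lam, P_lam(u,v)) : lam eigenvalue of M}}`. -/
def projInv {n : Type*} (Λ : Finset ℝ) (P : ℝ → Matrix n n ℝ) (u v : n) :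
    Multiset (ℝ × ℝ) :=
  Λ.val.map fun lam => (lam, P lam u v)

/-! ### Subgraph Weisfeiler-Lehman variants (SWL, PSWL) and 3-WL -/

/-- Round-`l` color type for SWL. -/
def SColor : ℕ → Type
  | 0 => ℕ
  | l + 1 => SColor l × Multiset (SColor l × ℕ)

/-- Initial pair color: `1` on the diagonal, `0` off it. -/
def initPairColor {V : Type*} (u v : V) : ℕ := if u = v then 1 else 0

/-- The SWL pair-coloring. -/
def swl {V : Type*} [Fintype V] (G : SimpleGraph V) :
    (l : ℕ) → V → V → SColor l
  | 0 => fun u v => initPairColor u v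
  | l + 1 => fun u v =>
      (swl G l u v, Finset.univ.val.map fun w => (swl G l u w, atp G v w))

/-- SWL indistinguishability. -/
def SWLIndist {V W : Type*} [Fintype V] [Fintype W]
    (G : SimpleGraph V) (H : SimpleGraph W) : Prop :=
  ∀ l : ℕ,
    ((Finset.univ : Finset (V × V)).val.map fun p => swl G l p.1 p.2) =
      ((Finset.univ : Finset (W × W)).val.map fun p => swl H l p.1 p.2)

/-- Round-`l` color type for PSWL. -/
def PSColor : ℕ → Type
  | 0 => ℕ
  | l + 1 => PSColor l × PSColor l × Multiset (PSColor l × ℕ)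

/-- The PSWL pair-coloring. -/
def pswl {V : Type*} [Fintype V] (G : SimpleGraph V) :
    (l : ℕ) → V → V → PSColor l
  | 0 => fun u v => initPairColor u v
  | l + 1 => fun u v =>
      (pswl G l u v, pswl G l v v,
        Finset.univ.val.map fun w => (pswl G l u w, atp G v w))

/-- PSWL indistinguishability. -/
def PSWLIndist {V W : Type*} [Fintype V] [Fintype W]
    (G : SimpleGraph V) (H : SimpleGraph W) : Prop :=
  ∀ l : ℕ,
    ((Finset.univ : Finset (V × V)).val.map fun p => pswl G l p.1 p.2) =
      ((Finset.univ : Finset (W × W)).val.map fun p => pswl H l p.1 p.2)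

/-- Round-`l` color type for 3-WL; the initial color records which of
`u, v, w` coincide and which of the pairs are edges. -/
def W3Color : ℕ → Type
  | 0 => Bool × Bool × Bool × Bool × Bool × Bool
  | l + 1 => W3Color l × Multiset (W3Color l × W3Color l × W3Color l)

/-- The 3-WL triple-coloring. -/
def wl3 {V : Type*} [Fintype V] (G : SimpleGraph V) :
    (l : ℕ) → V → V → V → W3Color l
  | 0 => fun u v w =>
      (decide (u = v), decide (u = w), decide (v = w),
        decide (G.Adj u v), decide (G.Adj u w), decide (G.Adj v w))
  | l + 1 => fun u v w =>
      (wl3 G l u v w,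
        Finset.univ.val.map fun z =>
          (wl3 G l z v w, wl3 G l u z w, wl3 G l u v z))

/-- 3-WL indistinguishability. -/
def WL3Indist {V W : Type*} [Fintype V] [Fintype W]
    (G : SimpleGraph V) (H : SimpleGraph W) : Prop :=
  ∀ l : ℕ,
    ((Finset.univ : Finset (V × V × V)).val.map fun p => wl3 G l p.1 p.2.1 p.2.2) =
      ((Finset.univ : Finset (W × W × W)).val.map fun p => wl3 H l p.1 p.2.1 p.2.2)

/-! ### Distances -/

/-- The shortest-path distance, valued in `ℕ∞`. -/
def spd {V : Type*} (G : SimpleGraph V) (u v : V) : ℕ∞ := G.edist u v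

/-- The four Penrose conditions characterizing the Moore–Penrose
pseudoinverse `X` of `B`. -/
def IsMoorePenrose {n : Type*} [Fintype n] (B X : Matrix n n ℝ) : Prop :=
  B * X * B = B ∧ X * B * X = X ∧ (B * X)ᵀ = B * X ∧ (X * B)ᵀ = X * B

/-- Resistance distance computed from (a Moore–Penrose pseudoinverse of)
the Laplacian: `X(u,u) + X(v,v) - 2X(u,v)` for vertices in the same
connected component, and `∞` otherwise. -/
def rdOf {V : Type*} (G : SimpleGraph V) (X : Matrix V V ℝ) (u v : V) :
    WithTop ℝ :=
  if G.Reachable u v then ((X u u + X v v - 2 * X u v : ℝ) : WithTop ℝ) else ⊤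

/-- Matrix exponential, as the everywhere-convergent power series
`exp B = ∑ Bⁿ/n!`. -/
def matExp {V : Type*} [Fintype V] (B : Matrix V V ℝ) : Matrix V V ℝ :=
  ∑' n : ℕ, ((n.factorial : ℝ))⁻¹ • B ^ n

/-! ### Connectivity notions -/

/-- Number of connected components. -/
def numComponents {V : Type*} (G : SimpleGraph V) : ℕ :=
  Nat.card G.ConnectedComponent

/-- A cut vertex: deleting it (and all incident edges) strictly increases
the number of connected components. -/
def IsCutVertex {V : Type*} (G : SimpleGraph V) (v : V) : Prop :=
  numComponents G < numComponents (G.induce {w : V | w ≠ v})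

/-- A cut edge: it is an edge whose deletion strictly increases the number
of connected components. -/
def IsCutEdge {V : Type*} (G : SimpleGraph V) (e : Sym2 V) : Prop :=
  e ∈ G.edgeSet ∧ numComponents G < numComponents (G.deleteEdges {e})


/-! ### Auxiliary machinery for Statement 0 -/

/-- Map a function over the feature components of a color. -/
def colorMap {α β : Type} (t : α → β) : (l : ℕ) → Color α l → Color β l
  | 0 => fun _ => ()
  | l + 1 => fun c =>
      (colorMap t l c.1, c.2.map fun p => (colorMap t l p.1, t p.2))

lemma colorFn_comp {V : Type*} [Fintype V] {α β : Type} (t : α → β)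
    (f : V → V → α) (l : ℕ) (u : V) :
    colorFn (fun u v => t (f u v)) l u = colorMap t l (colorFn f l u) := by
  induction l generalizing u with
  | zero => rfl
  | succ l ih =>
    simp only [colorFn, colorMap, Multiset.map_map, Function.comp]
    refine Prod.ext (ih u) (Multiset.map_congr rfl fun v _ => ?_)
    rw [ih v]

lemma nodeIndist_comp {V W : Type*} [Fintype V] [Fintype W] {α β : Type}
    (t : α → β) (f : V → V → α) (g : W → W → α)
    (h : NodeIndist f g) :
    NodeIndist (fun u v => t (f u v)) (fun u v => t (g u v)) := by
  intro l
  have h' := h l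
  have e1 : (Finset.univ.val.map (colorFn (fun u v => t (f u v)) l)) =
      (Finset.univ.val.map (colorFn f l)).map (colorMap t l) := by
    rw [Multiset.map_map]
    exact Multiset.map_congr rfl fun u _ => colorFn_comp t f l u
  have e2 : (Finset.univ.val.map (colorFn (fun u v => t (g u v)) l)) =
      (Finset.univ.val.map (colorFn g l)).map (colorMap t l) := by
    rw [Multiset.map_map]
    exact Multiset.map_congr rfl fun u _ => colorFn_comp t g l u
  rw [e1, e2, h']

/-- Decode the atomic type from the projection-invariant multiset. -/
def decodeAtp (S : Multiset (ℝ × ℝ)) : ℕ :=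
  if (S.map Prod.snd).sum = 1 then 0
  else if (S.map fun p => p.1 * p.2).sum = 0 then 2 else 1

lemma projInv_snd_sum {n : Type*} [Fintype n] {M : Matrix n n ℝ}
    {Λ : Finset ℝ} {P : ℝ → Matrix n n ℝ} (hP : IsSpectralDecomp M Λ P)
    (u v : n) :
    ((projInv Λ P u v).map Prod.snd).sum = if u = v then (1 : ℝ) else 0 := by
  have h : ((projInv Λ P u v).map Prod.snd).sum = ∑ lam ∈ Λ, P lam u v := by
    rw [projInv, Multiset.map_map]; rfl
  rw [h, ← Matrix.sum_apply, hP.sum_one, Matrix.one_apply]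

lemma projInv_mul_sum {n : Type*} [Fintype n] {M : Matrix n n ℝ}
    {Λ : Finset ℝ} {P : ℝ → Matrix n n ℝ} (hP : IsSpectralDecomp M Λ P)
    (u v : n) :
    ((projInv Λ P u v).map fun p => p.1 * p.2).sum = M u v := by
  have h : ((projInv Λ P u v).map fun p => p.1 * p.2).sum
      = ∑ lam ∈ Λ, lam * P lam u v := by
    rw [projInv, Multiset.map_map]; rfl
  have h2 : ∑ lam ∈ Λ, lam * P lam u v = (∑ lam ∈ Λ, lam • P lam) u v := by
    rw [Matrix.sum_apply]; simp [Matrix.smul_apply]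
  rw [h, h2, hP.sum_smul]

lemma matOf_off_diag_ne_zero_iff {V : Type*} [Fintype V] (G : SimpleGraph V)
    (hG : ∀ v, 0 < G.degree v) (c : MatChoice) {u v : V} (huv : u ≠ v) :
    matOf c G u v ≠ 0 ↔ G.Adj u v := by
  have hlap : lapM G u v = -(if G.Adj u v then (1 : ℝ) else 0) := by
    simp [lapM, degM, adjM, Matrix.sub_apply, Matrix.diagonal_apply_ne _ huv]
  cases c with
  | adj =>
    simp only [matOf, adjM, SimpleGraph.adjMatrix_apply]
    by_cases h : G.Adj u v <;> simp [h]
  | lap =>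
    simp only [matOf, hlap]
    by_cases h : G.Adj u v <;> simp [h]
  | normLap =>
    have hu : (Real.sqrt (G.degree u))⁻¹ ≠ 0 :=
      inv_ne_zero (ne_of_gt (Real.sqrt_pos.mpr (by exact_mod_cast hG u)))
    have hv : (Real.sqrt (G.degree v))⁻¹ ≠ 0 :=
      inv_ne_zero (ne_of_gt (Real.sqrt_pos.mpr (by exact_mod_cast hG v)))
    have hentry : normLapM G u v =
        (Real.sqrt (G.degree u))⁻¹ * lapM G u v * (Real.sqrt (G.degree v))⁻¹ := by
      simp [normLapM, invSqrtDegM, Matrix.mul_diagonal, Matrix.diagonal_mul]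
    simp only [matOf, hentry, hlap]
    by_cases h : G.Adj u v <;> simp [h, hu, hv]

lemma atp_eq_decode {V : Type*} [Fintype V] (G : SimpleGraph V)
    (hG : ∀ v, 0 < G.degree v) (c : MatChoice)
    {Λ : Finset ℝ} {P : ℝ → Matrix V V ℝ}
    (hP : IsSpectralDecomp (matOf c G) Λ P) (u v : V) :
    atp G u v = decodeAtp (projInv Λ P u v) := by
  unfold atp decodeAtp
  rw [projInv_snd_sum hP, projInv_mul_sum hP]
  by_cases huv : u = v
  · subst huv; simp
  · have hne : (if u = v then (1 : ℝ) else 0) ≠ 1 := by simp [huv]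
    rw [if_neg huv, if_neg hne]
    by_cases h : G.Adj u v
    · rw [if_pos h, if_neg ((matOf_off_diag_ne_zero_iff G hG c huv).mpr h)]
    · rw [if_neg h, if_pos (by
        by_contra hne2
        exact h ((matOf_off_diag_ne_zero_iff G hG c huv).mp hne2))]

/-- For each `M ∈ {A, L, L̂}`: if `G` and `H` are
EPWL-indistinguishable with respect to `M`, then they are
1-WL-indistinguishable. -/
theorem epwl_bounds_wl1 {V W : Type*} [Fintype V] [Fintype W]
    (G : SimpleGraph V) (H : SimpleGraph W)
    (hG : ∀ v, 0 < G.degree v) (hH : ∀ w, 0 < H.degree w)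
    (c : MatChoice)
    (ΛG : Finset ℝ) (PG : ℝ → Matrix V V ℝ)
    (hPG : IsSpectralDecomp (matOf c G) ΛG PG)
    (ΛH : Finset ℝ) (PH : ℝ → Matrix W W ℝ)
    (hPH : IsSpectralDecomp (matOf c H) ΛH PH)
    (hEP : NodeIndist (projInv ΛG PG) (projInv ΛH PH)) :
    WL1Indist G H := by
  have hGeq : atp G = fun u v => decodeAtp (projInv ΛG PG u v) :=
    funext fun u => funext fun v => atp_eq_decode G hG c hPG u v
  have hHeq : atp H = fun u v => decodeAtp (projInv ΛH PH u v) :=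
    funext fun u => funext fun v => atp_eq_decode H hH c hPH u v
  unfold WL1Indist
  rw [hGeq, hHeq]
  exact nodeIndist_comp decodeAtp _ _ hEP

end EPWL
end
end

section
/- There exist two non-isomorphic finite simple graphs G and H (with no isolated vertices) that are 1-WL-indistinguishable, but such that for each choice of graph matrix M ∈ {adjacency matrix A, Laplacian L, normalized Laplacian L̂}, G and H are NOT EPWL-indistinguishable with respect to M. (EPWL is strictly more expressive than 1-WL.) -/
open scoped Classical
open Matrix BigOperators

noncomputable section

namespace EPWL

/-!
The hexagon `C₆ = Cay(ℤ/6, {±1})` and two disjoint triangles `2K₃ = Cay(ℤ/6, {±2})` are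
both 2-regular on six vertices, so 1-WL gives every vertex of either graph the same colour at every
round. EPWL is stronger because already its round-one colours record the eigenvalue set of `M`: it
is the list of first components of any `𝒫^M(u, v)`. On a `k`-regular graph `L = kI - A` and
`L̂ = L / k` share their eigenvectors with `A`, and `1` is an adjacency eigenvalue of `C₆` (with
eigenvector `(1, 1, 0, -1, -1, 0)`) but not of `2K₃`, whose adjacency spectrum is `{2, -1}`.
-/

open Finset

section ColorRefinement

variable {V W : Type*} [Fintype V] [Fintype W] {α : Type} {f : V → V → α} {g : W → W → α}

theorem NodeIndist.exists_eq (h : NodeIndist f g) (u v : V) : ∃ x y, g x y = f u v := by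
  have hu : colorFn f 1 u ∈ univ.val.map (colorFn g 1) :=
    h 1 ▸ Multiset.mem_map_of_mem _ (mem_univ u)
  obtain ⟨x, -, hx⟩ := Multiset.mem_map.mp hu
  have hrow : univ.val.map (fun y => (colorFn g 0 y, g x y)) =
      univ.val.map (fun v => (colorFn f 0 v, f u v)) := congrArg Prod.snd hx
  have hv : (colorFn f 0 v, f u v) ∈ univ.val.map fun y => (colorFn g 0 y, g x y) :=
    hrow ▸ Multiset.mem_map_of_mem _ (mem_univ v)
  obtain ⟨y, -, hy⟩ := Multiset.mem_map.mp hv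
  exact ⟨x, y, congrArg Prod.snd hy⟩

theorem nodeIndist_of_forall_map_eq (hcard : Fintype.card V = Fintype.card W) (m : Multiset α)
    (hf : ∀ u, univ.val.map (f u) = m) (hg : ∀ x, univ.val.map (g x) = m) : NodeIndist f g := by
  have hconst : ∀ l, ∃ c, (∀ u, colorFn f l u = c) ∧ (∀ x, colorFn g l x = c) := by
    intro l
    induction l with
    | zero => exact ⟨(), fun _ => rfl, fun _ => rfl⟩
    | succ l ih =>
      obtain ⟨c, hfc, hgc⟩ := ih
      refine ⟨(c, m.map fun a => (c, a)), fun u => ?_, fun x => ?_⟩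
      · simp only [colorFn, hfc, ← hf u, Multiset.map_map, Function.comp_def]; rfl
      · simp only [colorFn, hgc, ← hg x, Multiset.map_map, Function.comp_def]; rfl
  intro l
  obtain ⟨c, hfc, hgc⟩ := hconst l
  simp only [hfc, hgc, Multiset.map_const', card_val, card_univ, hcard]

end ColorRefinement

section WL1

variable {V W : Type*} [Fintype V] [Fintype W]

theorem map_atp_of_isRegularOfDegree {G : SimpleGraph V} {k : ℕ} (h : G.IsRegularOfDegree k)
    (u : V) : univ.val.map (atp G u) =
      0 ::ₘ (Multiset.replicate k 1 + Multiset.replicate (Fintype.card V - (k + 1)) 2) := by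
  ext a
  rw [Multiset.count_map, ← filter_val, card_val]
  rcases a with _ | _ | _ | a
  · have hfilter : univ.filter (fun v => 0 = atp G u v) = {u} := by
      ext v
      simp only [mem_filter, mem_univ, true_and]
      unfold atp
      split_ifs <;> simp_all [eq_comm]
    simp [hfilter, Multiset.count_replicate]
  · have hfilter : univ.filter (fun v => 1 = atp G u v) = G.neighborFinset u := by
      ext v
      simp only [mem_filter, mem_univ, true_and]
      unfold atp
      split_ifs <;> simp_all
    simp [hfilter, Multiset.count_replicate, h.degree_eq]
  · have hfilter : univ.filter (fun v => 2 = atp G u v) = (insert u (G.neighborFinset u))ᶜ := by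
      ext v
      simp only [mem_filter, mem_univ, true_and]
      unfold atp
      split_ifs <;> simp_all [eq_comm]
    simp [hfilter, Multiset.count_replicate, card_compl, h.degree_eq, Nat.sub_add_eq]
  · have hfilter : univ.filter (fun v => a + 3 = atp G u v) = ∅ := by
      ext v
      simp only [mem_filter]
      unfold atp
      split_ifs <;> simp
    simp [hfilter, Multiset.count_replicate]

theorem wl1Indist_of_isRegularOfDegree (hcard : Fintype.card V = Fintype.card W)
    {G : SimpleGraph V} {H : SimpleGraph W} {k : ℕ} (hG : G.IsRegularOfDegree k)
    (hH : H.IsRegularOfDegree k) : WL1Indist G H :=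
  nodeIndist_of_forall_map_eq hcard _ (map_atp_of_isRegularOfDegree hG)
    (hcard ▸ map_atp_of_isRegularOfDegree hH)

end WL1

section Spectral

variable {n : Type*} {Λ : Finset ℝ} {P : ℝ → Matrix n n ℝ}

theorem projInv_map_fst (u v : n) : (projInv Λ P u v).map Prod.fst = Λ.val := by
  simp [projInv, Multiset.map_map]

variable [Fintype n] {M : Matrix n n ℝ}

theorem IsSpectralDecomp.mul_proj (h : IsSpectralDecomp M Λ P) {lam : ℝ} (hlam : lam ∈ Λ) :
    M * P lam = lam • P lam := by
  rw [← h.sum_smul, Finset.sum_mul, Finset.sum_eq_single_of_mem lam hlam, smul_mul_assoc,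
    h.idem lam hlam]
  intro mu hmu hne
  rw [smul_mul_assoc, h.orth mu hmu lam hlam hne, smul_zero]

theorem IsSpectralDecomp.proj_mul (h : IsSpectralDecomp M Λ P) {lam : ℝ} (hlam : lam ∈ Λ) :
    P lam * M = lam • P lam := by
  rw [← h.sum_smul, Finset.mul_sum, Finset.sum_eq_single_of_mem lam hlam, mul_smul_comm,
    h.idem lam hlam]
  intro mu hmu hne
  rw [mul_smul_comm, h.orth lam hlam mu hmu hne.symm, smul_zero]

theorem IsSpectralDecomp.mem_iff (h : IsSpectralDecomp M Λ P) {lam : ℝ} :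
    lam ∈ Λ ↔ ∃ x ≠ 0, M *ᵥ x = lam • x := by
  constructor
  · intro hlam
    obtain ⟨y, hy⟩ : ∃ y, P lam *ᵥ y ≠ 0 := by
      by_contra! hzero
      exact h.nonzero lam hlam
        (Matrix.toLin'.injective (LinearMap.ext fun y => by simpa using hzero y))
    refine ⟨P lam *ᵥ y, hy, ?_⟩
    rw [Matrix.mulVec_mulVec, h.mul_proj hlam, Matrix.smul_mulVec]
  · rintro ⟨x, hx, hMx⟩
    by_contra hlam
    have hkill : ∀ mu ∈ Λ, P mu *ᵥ x = 0 := by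
      intro mu hmu
      have hne : mu - lam ≠ 0 := sub_ne_zero.mpr fun heq => hlam (heq ▸ hmu)
      have : (mu - lam) • P mu *ᵥ x = 0 := by
        rw [sub_smul, ← Matrix.smul_mulVec, ← h.proj_mul hmu, ← Matrix.mulVec_mulVec, hMx,
          Matrix.mulVec_smul, sub_self]
      exact (smul_eq_zero.mp this).resolve_left hne
    apply hx
    rw [← Matrix.one_mulVec x, ← h.sum_one, Matrix.sum_mulVec]
    exact Finset.sum_eq_zero hkill

theorem eq_of_nodeIndist_projInv {V W : Type*} [Fintype V] [Fintype W] [Nonempty V]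
    {ΛG ΛH : Finset ℝ} {PG : ℝ → Matrix V V ℝ} {PH : ℝ → Matrix W W ℝ}
    (h : NodeIndist (projInv ΛG PG) (projInv ΛH PH)) : ΛG = ΛH := by
  obtain ⟨u⟩ := ‹Nonempty V›
  obtain ⟨x, y, hxy⟩ := h.exists_eq u u
  have := congrArg (Multiset.map Prod.fst) hxy
  rw [projInv_map_fst, projInv_map_fst] at this
  exact (Finset.val_inj.mp this).symm

end Spectral

section RegularGraph

variable {V : Type*} [Fintype V] {G : SimpleGraph V} {k : ℕ}

theorem degM_of_isRegularOfDegree (h : G.IsRegularOfDegree k) : degM G = (k : ℝ) • 1 := by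
  simp only [degM, h.degree_eq, Matrix.smul_one_eq_diagonal]

theorem lapM_of_isRegularOfDegree (h : G.IsRegularOfDegree k) :
    lapM G = (k : ℝ) • 1 - adjM G := by
  rw [lapM, degM_of_isRegularOfDegree h]

-- Also for `k = 0`, where both sides vanish because `(√0)⁻¹ = 0⁻¹ = 0`.
theorem normLapM_of_isRegularOfDegree (h : G.IsRegularOfDegree k) :
    normLapM G = (k : ℝ)⁻¹ • lapM G := by
  have hD : invSqrtDegM G = (√(k : ℝ))⁻¹ • 1 := by
    simp only [invSqrtDegM, h.degree_eq, Matrix.smul_one_eq_diagonal]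
  rw [normLapM, hD, Matrix.smul_mul, Matrix.one_mul, Matrix.mul_smul, Matrix.mul_one, smul_smul,
    ← mul_inv, Real.mul_self_sqrt k.cast_nonneg]

def regularEigenvalue : MatChoice → ℝ → ℝ → ℝ
  | .adj, _, lam => lam
  | .lap, k, lam => k - lam
  | .normLap, k, lam => (k - lam) / k

theorem matOf_mulVec_eq_iff (h : G.IsRegularOfDegree k) (hk : k ≠ 0) (c : MatChoice)
    (x : V → ℝ) (lam : ℝ) :
    matOf c G *ᵥ x = regularEigenvalue c k lam • x ↔ adjM G *ᵥ x = lam • x := by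
  have hlap : lapM G *ᵥ x = ((k : ℝ) - lam) • x ↔ adjM G *ᵥ x = lam • x := by
    rw [lapM_of_isRegularOfDegree h, Matrix.sub_mulVec, Matrix.smul_mulVec, Matrix.one_mulVec,
      sub_smul, sub_right_inj]
  cases c with
  | adj => rfl
  | lap => exact hlap
  | normLap =>
    rw [← hlap]
    change normLapM G *ᵥ x = ((k - lam) / k) • x ↔ _
    rw [normLapM_of_isRegularOfDegree h, Matrix.smul_mulVec, div_eq_inv_mul, mul_smul]
    exact (smul_right_injective _ (inv_ne_zero (Nat.cast_ne_zero.mpr hk))).eq_iff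

theorem IsSpectralDecomp.regularEigenvalue_mem_iff {c : MatChoice} {Λ : Finset ℝ}
    {P : ℝ → Matrix V V ℝ} (hdecomp : IsSpectralDecomp (matOf c G) Λ P)
    (h : G.IsRegularOfDegree k) (hk : k ≠ 0) {lam : ℝ} :
    regularEigenvalue c k lam ∈ Λ ↔ ∃ x ≠ 0, adjM G *ᵥ x = lam • x := by
  simp only [hdecomp.mem_iff, matOf_mulVec_eq_iff h hk]

end RegularGraph

section Circulant

open SimpleGraph

variable {Γ : Type*} [AddCommGroup Γ] {d : Γ}

theorem sub_ne_add_of_add_self_ne_zero (hd : d + d ≠ 0) (v : Γ) : v - d ≠ v + d := by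
  rw [ne_eq, sub_eq_iff_eq_add, add_assoc, left_eq_add]
  exact hd

variable [DecidableEq Γ]

theorem circulantGraph_singleton_neighborFinset (hd : d ≠ 0) (v : Γ)
    [Fintype ((circulantGraph {d}).neighborSet v)] :
    (circulantGraph {d}).neighborFinset v = {v - d, v + d} := by
  ext w
  simp only [mem_neighborFinset, circulantGraph_adj, Set.mem_singleton_iff, mem_insert,
    mem_singleton]
  constructor
  · rintro ⟨-, hvw | hwv⟩
    · left; rw [← hvw, sub_sub_cancel]
    · right; rw [← hwv, add_sub_cancel]
  · rintro (rfl | rfl)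
    · exact ⟨fun h => hd (by simpa using h.symm), Or.inl (sub_sub_cancel v d)⟩
    · exact ⟨fun h => hd (by simpa using h.symm), Or.inr (add_sub_cancel_left v d)⟩

variable [Fintype Γ]

theorem isRegularOfDegree_circulantGraph_singleton (hd : d + d ≠ 0) :
    (circulantGraph {d}).IsRegularOfDegree 2 := by
  intro v
  rw [← card_neighborFinset_eq_degree,
    circulantGraph_singleton_neighborFinset (by rintro rfl; simp at hd),
    card_pair (sub_ne_add_of_add_self_ne_zero hd v)]

theorem adjM_circulantGraph_singleton_mulVec_apply (hd : d + d ≠ 0) (x : Γ → ℝ) (v : Γ) :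
    (adjM (circulantGraph {d}) *ᵥ x) v = x (v - d) + x (v + d) := by
  rw [adjM, adjMatrix_mulVec_apply,
    circulantGraph_singleton_neighborFinset (by rintro rfl; simp at hd),
    sum_pair (sub_ne_add_of_add_self_ne_zero hd v)]

end Circulant

section Hexagon

open SimpleGraph

def hexagon : SimpleGraph (Fin 6) := circulantGraph {1}

def twoTriangles : SimpleGraph (Fin 6) := circulantGraph {2}

theorem hexagon_isRegularOfDegree : hexagon.IsRegularOfDegree 2 := by
  unfold hexagon
  convert isRegularOfDegree_circulantGraph_singleton (d := (1 : Fin 6)) (by decide)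

theorem twoTriangles_isRegularOfDegree : twoTriangles.IsRegularOfDegree 2 := by
  unfold twoTriangles
  convert isRegularOfDegree_circulantGraph_singleton (d := (2 : Fin 6)) (by decide)

theorem isEmpty_iso_hexagon_twoTriangles : IsEmpty (hexagon ≃g twoTriangles) := by
  have hexagon_triangle_free :
      ∀ a b c, hexagon.Adj a b → hexagon.Adj b c → hexagon.Adj a c → False := by
    unfold hexagon; decide
  refine ⟨fun e => hexagon_triangle_free (e.symm 0) (e.symm 2) (e.symm 4) ?_ ?_ ?_⟩ <;>
    exact e.symm.map_adj_iff.mpr (by unfold twoTriangles; decide)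

theorem hexagon_adjM_mulVec :
    adjM hexagon *ᵥ ![1, 1, 0, -1, -1, 0] = ![1, 1, 0, -1, -1, 0] := by
  funext v
  rw [hexagon, adjM_circulantGraph_singleton_mulVec_apply (by decide)]
  fin_cases v <;> simp

theorem twoTriangles_eq_zero_of_adjM_mulVec {y : Fin 6 → ℝ}
    (hy : adjM twoTriangles *ᵥ y = y) : y = 0 := by
  have hrow (v : Fin 6) : y v = y (v - 2) + y (v + 2) := by
    rw [← adjM_circulantGraph_singleton_mulVec_apply (by decide), ← twoTriangles, hy]
  have h0 : y 0 = y 4 + y 2 := hrow 0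
  have h1 : y 1 = y 5 + y 3 := hrow 1
  have h2 : y 2 = y 0 + y 4 := hrow 2
  have h3 : y 3 = y 1 + y 5 := hrow 3
  have h4 : y 4 = y 2 + y 0 := hrow 4
  have h5 : y 5 = y 3 + y 1 := hrow 5
  funext v
  fin_cases v <;> simp <;> linarith

end Hexagon

/-- There exist non-isomorphic graphs that are
1-WL-indistinguishable but, for each `M ∈ {A, L, L̂}`, not
EPWL-indistinguishable with respect to `M`. -/
theorem epwl_strictly_finer_than_wl1 :
    ∃ (n : ℕ) (G H : SimpleGraph (Fin n)),
      (∀ v, 0 < G.degree v) ∧ (∀ v, 0 < H.degree v) ∧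
      IsEmpty (G ≃g H) ∧
      WL1Indist G H ∧
      ∀ (c : MatChoice) (ΛG : Finset ℝ) (PG : ℝ → Matrix (Fin n) (Fin n) ℝ),
        IsSpectralDecomp (matOf c G) ΛG PG →
        ∀ (ΛH : Finset ℝ) (PH : ℝ → Matrix (Fin n) (Fin n) ℝ),
          IsSpectralDecomp (matOf c H) ΛH PH →
          ¬ NodeIndist (projInv ΛG PG) (projInv ΛH PH) := by
  refine ⟨6, hexagon, twoTriangles,
    fun v => by rw [hexagon_isRegularOfDegree.degree_eq]; norm_num,
    fun v => by rw [twoTriangles_isRegularOfDegree.degree_eq]; norm_num,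
    isEmpty_iso_hexagon_twoTriangles,
    wl1Indist_of_isRegularOfDegree rfl hexagon_isRegularOfDegree twoTriangles_isRegularOfDegree,
    fun c ΛG PG hG ΛH PH hH hindist => ?_⟩
  have hmem : regularEigenvalue c (2 : ℕ) 1 ∈ ΛG :=
    (hG.regularEigenvalue_mem_iff hexagon_isRegularOfDegree two_ne_zero).mpr
      ⟨![1, 1, 0, -1, -1, 0], fun h => by simpa using congrFun h 0,
        by rw [one_smul]; exact hexagon_adjM_mulVec⟩
  rw [eq_of_nodeIndist_projInv hindist,
    hH.regularEigenvalue_mem_iff twoTriangles_isRegularOfDegree two_ne_zero] at hmem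
  obtain ⟨y, hy, hAy⟩ := hmem
  exact hy (twoTriangles_eq_zero_of_adjM_mulVec (by rw [hAy, one_smul]))

end EPWL
end
end

section
/- For each choice of graph matrix M ∈ {adjacency matrix A, Laplacian L, normalized Laplacian L̂}: if two finite simple graphs G and H (with no isolated vertices) are PSWL-indistinguishable, then G and H are EPWL-indistinguishable with respect to M. (The expressive power of EPWL is bounded by PSWL in distinguishing non-isomorphic graphs.) -/
/-!
PSWL colors determine the entries of the powers of the graph matrix: after `k + 1` rounds the
color of `(u, v)` determines `(M ^ k) u v` for `M ∈ {A, L, L̂}`, because the PSWL update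
aggregates over `w` exactly as `(M ^ (k + 1)) u v = ∑ w, (M ^ k) u w * M w v` does, and `M w v`
depends only on `atp (w, v)` and the degrees of `w` and `v`, which one round already sees.
Since `M ^ k = ∑ λ ^ k • P λ` over the distinct eigenvalues, Vandermonde interpolation with
`k < |Λ|` recovers the spectrum from the traces `tr (M ^ k)`, and each `P λ u v` from the entries
`(M ^ k) u v`. The traces are sums over the diagonal colors, which PSWL-indistinguishable graphs
share. Finally, a pair feature determined by PSWL colors drives a node refinement determined by the
diagonal colors, two PSWL rounds per refinement round: the color of `(v, v)` lists the colors of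
the pairs `(v, w)`.
-/

open scoped Classical
open Matrix BigOperators

noncomputable section

theorem Multiset.map_eq_map_of_map_eq {α β κ γ : Type*} {s : Multiset α} {t : Multiset β}
    {f : α → κ} {g : β → κ} {F : α → γ} {F' : β → γ} (h : s.map f = t.map g)
    (hF : ∀ a b, f a = g b → F a = F' b) : s.map F = t.map F' := by
  rw [← Multiset.rel_eq, Multiset.rel_map] at h ⊢
  exact h.mono fun a _ b _ hab => hF a b hab

theorem Finset.eqOn_of_sum_pow_mul_eq {K : Type*} [Field K] {S : Finset K} {c d : K → K}
    (h : ∀ k < S.card, ∑ μ ∈ S, μ ^ k * c μ = ∑ μ ∈ S, μ ^ k * d μ) :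
    Set.EqOn c d S := by
  have hpoly : ∀ p : Polynomial K, p.natDegree < S.card →
      ∑ μ ∈ S, p.eval μ * c μ = ∑ μ ∈ S, p.eval μ * d μ := by
    intro p hp
    simp only [Polynomial.eval_eq_sum_range' hp, Finset.sum_mul]
    rw [Finset.sum_comm, Finset.sum_comm (s := S)]
    refine Finset.sum_congr rfl fun k hk => ?_
    simp only [mul_assoc, ← Finset.mul_sum, h k (Finset.mem_range.1 hk)]
  intro lam hlam
  have hinj : Set.InjOn id (S : Set K) := Set.injOn_id _
  have hbasis : ∀ e : K → K,
      ∑ μ ∈ S, (Lagrange.basis S id lam).eval μ * e μ = e lam := by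
    intro e
    have hself : (Lagrange.basis S id lam).eval lam = 1 := Lagrange.eval_basis_self hinj hlam
    rw [Finset.sum_eq_single_of_mem lam hlam fun μ hμ hne => by
      have hzero : (Lagrange.basis S id lam).eval μ = 0 :=
        Lagrange.eval_basis_of_ne (v := id) hne.symm hμ
      rw [hzero, zero_mul]]
    rw [hself, one_mul]
  rw [← hbasis c, ← hbasis d]
  refine hpoly _ ?_
  rw [Lagrange.natDegree_basis hinj hlam]
  have hcard := Finset.card_pos.2 ⟨lam, hlam⟩
  omega

namespace EPWL

namespace IsSpectralDecomp

variable {n m : Type*} [Fintype n] [Fintype m] {M : Matrix n n ℝ} {N : Matrix m m ℝ}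
  {Λ Λ' : Finset ℝ} {P : ℝ → Matrix n n ℝ} {Q : ℝ → Matrix m m ℝ}

theorem pow_eq_sum (hP : IsSpectralDecomp M Λ P) (k : ℕ) :
    M ^ k = ∑ lam ∈ Λ, lam ^ k • P lam := by
  induction k with
  | zero => simpa using hP.sum_one.symm
  | succ k ih =>
    rw [pow_succ, ih, ← hP.sum_smul, Finset.sum_mul]
    refine Finset.sum_congr rfl fun lam hlam => ?_
    rw [Finset.mul_sum, Finset.sum_eq_single_of_mem lam hlam fun mu hmu hne => by
      rw [smul_mul_smul_comm, hP.orth lam hlam mu hmu hne.symm, smul_zero]]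
    rw [smul_mul_smul_comm, hP.idem lam hlam, pow_succ]

theorem pow_apply (hP : IsSpectralDecomp M Λ P) (k : ℕ) (u v : n) :
    (M ^ k) u v = ∑ lam ∈ Λ, lam ^ k * P lam u v := by
  simp [hP.pow_eq_sum k, Matrix.sum_apply]

theorem trace_pow (hP : IsSpectralDecomp M Λ P) (k : ℕ) :
    (M ^ k).trace = ∑ lam ∈ Λ, lam ^ k * (P lam).trace := by
  simp [hP.pow_eq_sum k, Matrix.trace_sum]

theorem trace_ne_zero (hP : IsSpectralDecomp M Λ P) {lam : ℝ} (hlam : lam ∈ Λ) :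
    (P lam).trace ≠ 0 := by
  have hself : P lam = (P lam)ᴴ * P lam := by
    rw [Matrix.conjTranspose_eq_transpose_of_trivial, hP.symm lam hlam, hP.idem lam hlam]
  rw [hself, Ne, Matrix.trace_conjTranspose_mul_self_eq_zero_iff]
  exact hP.nonzero lam hlam

theorem finset_eq_of_trace_pow_eq (hP : IsSpectralDecomp M Λ P)
    (hQ : IsSpectralDecomp N Λ' Q) (h : ∀ k, (M ^ k).trace = (N ^ k).trace) : Λ = Λ' := by
  have hext : ∀ (Λ₀ : Finset ℝ) (t : ℝ → ℝ), Λ₀ ⊆ Λ ∪ Λ' → ∀ k : ℕ,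
      ∑ mu ∈ Λ ∪ Λ', mu ^ k * (if mu ∈ Λ₀ then t mu else 0) =
        ∑ mu ∈ Λ₀, mu ^ k * t mu := by
    intro Λ₀ t hsub k
    simp only [mul_ite, mul_zero]
    rw [Finset.sum_ite_mem, Finset.inter_eq_right.2 hsub]
  have heq := Finset.eqOn_of_sum_pow_mul_eq (S := Λ ∪ Λ')
    (c := fun mu => if mu ∈ Λ then (P mu).trace else 0)
    (d := fun mu => if mu ∈ Λ' then (Q mu).trace else 0) fun k _ => by
    rw [hext Λ _ Finset.subset_union_left, hext Λ' _ Finset.subset_union_right,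
      ← hP.trace_pow, ← hQ.trace_pow, h]
  ext lam
  constructor
  · intro hlam
    have hweight := heq (Finset.mem_union_left _ hlam)
    by_contra hlam'
    simp only [hlam, hlam', if_true, if_false] at hweight
    exact hP.trace_ne_zero hlam hweight
  · intro hlam
    have hweight := heq (Finset.mem_union_right _ hlam)
    by_contra hlam'
    simp only [hlam, hlam', if_true, if_false] at hweight
    exact hQ.trace_ne_zero hlam hweight.symm

theorem projInv_eq_of_pow_apply_eq (hP : IsSpectralDecomp M Λ P)
    (hQ : IsSpectralDecomp N Λ Q) {u v : n} {x y : m}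
    (h : ∀ k < Λ.card, (M ^ k) u v = (N ^ k) x y) : projInv Λ P u v = projInv Λ Q x y := by
  have heq : Set.EqOn (fun lam => P lam u v) (fun lam => Q lam x y) Λ :=
    Finset.eqOn_of_sum_pow_mul_eq fun k hk => by rw [← hP.pow_apply, ← hQ.pow_apply, h k hk]
  exact Multiset.map_congr rfl fun lam hlam => congrArg (Prod.mk lam) (heq hlam)

end IsSpectralDecomp

section Graph

variable {V W : Type*} {G : SimpleGraph V} {H : SimpleGraph W}

theorem atp_comm (G : SimpleGraph V) (u v : V) : atp G u v = atp G v u := by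
  simp only [atp, eq_comm, G.adj_comm]

theorem eq_iff_eq_and_adj_iff_adj_of_atp_eq {u v : V} {x y : W}
    (h : atp G u v = atp H x y) : (u = v ↔ x = y) ∧ (G.Adj u v ↔ H.Adj x y) := by
  unfold atp at h
  split_ifs at h <;> simp_all

variable [Fintype V] [Fintype W]

theorem degree_eq_count_atp (G : SimpleGraph V) (v : V) :
    G.degree v = (Finset.univ.val.map (atp G v)).count 1 := by
  rw [Multiset.count_map, ← SimpleGraph.card_neighborFinset_eq_degree,
    SimpleGraph.neighborFinset_eq_filter]
  refine congrArg Multiset.card (Multiset.filter_congr fun w _ => ?_)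
  unfold atp
  split_ifs <;> simp_all

theorem pswl_succ_eq_pswl_succ_iff {l : ℕ} {u v : V} {x y : W} :
    pswl G (l + 1) u v = pswl H (l + 1) x y ↔
      pswl G l u v = pswl H l x y ∧ pswl G l v v = pswl H l y y ∧
        (Finset.univ.val.map fun w => (pswl G l u w, atp G v w)) =
          Finset.univ.val.map fun z => (pswl H l x z, atp H y z) :=
  Prod.mk_inj.trans (and_congr_right' Prod.mk_inj)

variable (G H) in
def PswlDetermines {α : Type*} (r : ℕ) (f : V → V → α) (g : W → W → α) : Prop :=
  ∀ ⦃u v x y⦄, pswl G r u v = pswl H r x y → f u v = g x y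

theorem PswlDetermines.mono {α : Type*} {r s : ℕ} {f : V → V → α} {g : W → W → α}
    (hf : PswlDetermines G H r f g) (hrs : r ≤ s) : PswlDetermines G H s f g := by
  induction s, hrs using Nat.le_induction with
  | base => exact hf
  | succ s _ ih => exact fun _ _ _ _ h => ih (pswl_succ_eq_pswl_succ_iff.1 h).1

theorem pswlDetermines_atp : PswlDetermines G H 1 (atp G) (atp H) := by
  intro u v x y h
  have hmem : (pswl G 0 u u, atp G v u) ∈
      Finset.univ.val.map fun w => (pswl G 0 u w, atp G v w) :=
    Multiset.mem_map.2 ⟨u, Finset.mem_univ u, rfl⟩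
  rw [(pswl_succ_eq_pswl_succ_iff.1 h).2.2] at hmem
  obtain ⟨z, -, hz⟩ := Multiset.mem_map.1 hmem
  obtain ⟨hxz, hatp⟩ := Prod.mk_inj.1 hz
  replace hxz : initPairColor x z = initPairColor u u := hxz
  obtain rfl : x = z := by simpa [initPairColor, ite_eq_left_iff] using hxz
  rw [atp_comm, ← hatp, atp_comm]

theorem pswlDetermines_degree :
    PswlDetermines G H 1 (fun _ v => G.degree v) (fun _ y => H.degree y) := by
  intro u v x y h
  have hatp := congrArg (Multiset.map Prod.snd) (pswl_succ_eq_pswl_succ_iff.1 h).2.2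
  simp only [Multiset.map_map, Function.comp_def] at hatp
  simp only [degree_eq_count_atp, hatp]

theorem lapM_apply (G : SimpleGraph V) (u v : V) :
    lapM G u v = (if u = v then (G.degree u : ℝ) else 0) - if G.Adj u v then 1 else 0 := by
  simp [lapM, degM, adjM, Matrix.diagonal_apply, SimpleGraph.adjMatrix_apply]

theorem matOf_apply_eq_of_atp_eq (c : MatChoice) {u v : V} {x y : W}
    (hatp : atp G u v = atp H x y) (hu : G.degree u = H.degree x)
    (hv : G.degree v = H.degree y) : matOf c G u v = matOf c H x y := by
  obtain ⟨heq, hadj⟩ := eq_iff_eq_and_adj_iff_adj_of_atp_eq hatp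
  have hlap : lapM G u v = lapM H x y := by simp only [lapM_apply, heq, hadj, hu]
  cases c with
  | adj => simp only [matOf, adjM, SimpleGraph.adjMatrix_apply, hadj]
  | lap => exact hlap
  | normLap =>
    simp only [matOf, normLapM, invSqrtDegM, Matrix.mul_diagonal, Matrix.diagonal_mul, hlap, hu, hv]

theorem pswlDetermines_matOf_pow (c : MatChoice) (k : ℕ) :
    PswlDetermines G H (k + 1) (fun u v => (matOf c G ^ k) u v)
      (fun x y => (matOf c H ^ k) x y) := by
  induction k with
  | zero =>
    intro u v x y h
    simp only [pow_zero, Matrix.one_apply, (eq_iff_eq_and_adj_iff_adj_of_atp_eq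
      (pswlDetermines_atp h)).1]
  | succ k ih =>
    intro u v x y h
    obtain ⟨huv, -, hrow⟩ := pswl_succ_eq_pswl_succ_iff.1 h
    have hv := pswlDetermines_degree.mono (by omega) huv
    simp only [pow_succ, Matrix.mul_apply]
    refine congrArg Multiset.sum (Multiset.map_eq_map_of_map_eq hrow fun w z hwz => ?_)
    obtain ⟨hw, hatp⟩ := Prod.mk_inj.1 hwz
    exact congrArg₂ (· * ·) (ih hw) (matOf_apply_eq_of_atp_eq c
      (by rw [atp_comm, hatp, atp_comm]) (pswlDetermines_degree.mono (by omega) hw) hv)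

def PSColor.base : {r : ℕ} → PSColor r → ℕ
  | 0, c => c
  | _ + 1, c => PSColor.base c.1

theorem base_pswl (G : SimpleGraph V) : ∀ (r : ℕ) (u v : V),
    (pswl G r u v).base = initPairColor u v
  | 0, _, _ => rfl
  | r + 1, u, v => base_pswl G r u v

theorem filter_map_pswl_base_eq_one (G : SimpleGraph V) (r : ℕ) :
    ((Finset.univ : Finset (V × V)).val.map fun p => pswl G r p.1 p.2).filter
        (fun c => c.base = 1) = Finset.univ.val.map fun v => pswl G r v v := by
  have hdiag : (Finset.univ : Finset (V × V)).val.filter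
      ((fun c => c.base = 1) ∘ fun p => pswl G r p.1 p.2) = Finset.univ.diag.val := by
    rw [Finset.diag_eq_filter, Finset.univ_product_univ, Finset.filter_val]
    exact Multiset.filter_congr fun p _ => by simp [base_pswl, initPairColor]
  rw [Multiset.filter_map, hdiag, Finset.diag, Finset.map_val, Multiset.map_map]
  rfl

theorem map_pswl_diag_eq (hPS : PSWLIndist G H) (r : ℕ) :
    (Finset.univ.val.map fun v => pswl G r v v) = Finset.univ.val.map fun y => pswl H r y y := by
  rw [← filter_map_pswl_base_eq_one, ← filter_map_pswl_base_eq_one, hPS r]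

namespace PswlDetermines

variable {r : ℕ}

theorem map_diag_eq {α : Type*} {f : V → V → α} {g : W → W → α}
    (hf : PswlDetermines G H r f g) (hPS : PSWLIndist G H) :
    (Finset.univ.val.map fun v => f v v) = Finset.univ.val.map fun y => g y y :=
  Multiset.map_eq_map_of_map_eq (map_pswl_diag_eq hPS r) fun _ _ h => hf h

theorem colorFn {α : Type} {f : V → V → α} {g : W → W → α}
    (hf : PswlDetermines G H r f g) (l : ℕ) :
    PswlDetermines G H (r + 2 * l) (fun _ v => colorFn f l v) (fun _ y => colorFn g l y) := by
  induction l with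
  | zero => exact fun _ _ _ _ _ => rfl
  | succ l ih =>
    intro u v x y h
    rw [show r + 2 * (l + 1) = r + 2 * l + 1 + 1 by ring] at h
    obtain ⟨huv, hvv, -⟩ := pswl_succ_eq_pswl_succ_iff.1 h
    obtain ⟨-, -, hrow⟩ := pswl_succ_eq_pswl_succ_iff.1 hvv
    refine Prod.ext (ih.mono (Nat.le_succ _) huv)
      (Multiset.map_eq_map_of_map_eq hrow fun w z hwz => ?_)
    obtain ⟨hw, -⟩ := Prod.mk_inj.1 hwz
    exact Prod.ext (ih hw) (hf.mono (Nat.le_add_right _ _) hw)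

theorem nodeIndist {α : Type} {f : V → V → α} {g : W → W → α}
    (hf : PswlDetermines G H r f g) (hPS : PSWLIndist G H) : NodeIndist f g :=
  fun l => (hf.colorFn l).map_diag_eq hPS

end PswlDetermines

end Graph

theorem pswl_bounds_epwl_general {V W : Type*} [Fintype V] [Fintype W]
    (G : SimpleGraph V) (H : SimpleGraph W)
    (c : MatChoice)
    (ΛG : Finset ℝ) (PG : ℝ → Matrix V V ℝ)
    (hPG : IsSpectralDecomp (matOf c G) ΛG PG)
    (ΛH : Finset ℝ) (PH : ℝ → Matrix W W ℝ)
    (hPH : IsSpectralDecomp (matOf c H) ΛH PH)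
    (hPS : PSWLIndist G H) :
    NodeIndist (projInv ΛG PG) (projInv ΛH PH) := by
  have htrace (k : ℕ) : (matOf c G ^ k).trace = (matOf c H ^ k).trace :=
    congrArg Multiset.sum ((pswlDetermines_matOf_pow c k).map_diag_eq hPS)
  obtain rfl : ΛG = ΛH := hPG.finset_eq_of_trace_pow_eq hPH htrace
  refine PswlDetermines.nodeIndist (r := ΛG.card) (fun u v x y h => ?_) hPS
  exact hPG.projInv_eq_of_pow_apply_eq hPH fun k hk => (pswlDetermines_matOf_pow c k).mono hk h

/-- For each `M ∈ {A, L, L̂}`: if `G` and `H` are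
PSWL-indistinguishable, then they are EPWL-indistinguishable with respect
to `M`. -/
theorem pswl_bounds_epwl {V W : Type*} [Fintype V] [Fintype W]
    (G : SimpleGraph V) (H : SimpleGraph W)
    (hG : ∀ v, 0 < G.degree v) (hH : ∀ w, 0 < H.degree w)
    (c : MatChoice)
    (ΛG : Finset ℝ) (PG : ℝ → Matrix V V ℝ)
    (hPG : IsSpectralDecomp (matOf c G) ΛG PG)
    (ΛH : Finset ℝ) (PH : ℝ → Matrix W W ℝ)
    (hPH : IsSpectralDecomp (matOf c H) ΛH PH)
    (hPS : PSWLIndist G H) :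
    NodeIndist (projInv ΛG PG) (projInv ΛH PH) :=
  pswl_bounds_epwl_general G H c ΛG PG hPG ΛH PH hPH hPS

end EPWL
end
end

section
/- For each choice of graph matrix M ∈ {adjacency matrix A, Laplacian L, normalized Laplacian L̂}: if two finite simple graphs G and H (with no isolated vertices) are 3-WL-indistinguishable, then G and H are EPWL-indistinguishable with respect to M. (The expressive power of EPWL is bounded by 3-WL.) -/
open scoped Classical
open Matrix BigOperators

noncomputable section

namespace EPWL

/-!
Entries of `A`, `D` and `D^{-1/2}` at `(u, v)` are functions of the 3-WL color of `(u, v, w)`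
for any `w`, and if `X` and `Y` have this property then so does `X * Y`, one round later: the
entry `∑ z, X u z * Y z v` is read off the multiset of colors of `(u, z, w)` and `(z, v, w)`.
Such pairs of matrices on `G` and `H` (the same function of colors on both) form a subalgebra,
so they contain every polynomial in `M`. Their traces agree when `G` and `H` are
3-WL-indistinguishable, because the diagonal triples `(u, u, u)` have the same multiset of
colors. Comparing `tr q(M)²` for `q = ∏_{μ} (X - μ)` gives equal spectra, whereupon each
projection `P_λ`, a Lagrange polynomial in `M`, lies in the subalgebra; a round of EPWL
refinement is then one round of 3-WL.
-/

open Polynomial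

def W3Color.toAtomic : {m : ℕ} → W3Color m → Bool × Bool × Bool × Bool × Bool × Bool
  | 0, c => c
  | _ + 1, c => toAtomic c.1

def W3Color.down : (m k : ℕ) → W3Color (m + k) → W3Color m
  | _, 0, c => c
  | m, k + 1, c => down m k c.1

section WL3Colors

variable {V : Type*} [Fintype V] (G : SimpleGraph V)

lemma toAtomic_wl3 : ∀ (m : ℕ) (u v w : V), (wl3 G m u v w).toAtomic = wl3 G 0 u v w
  | 0, _, _, _ => rfl
  | m + 1, u, v, w => toAtomic_wl3 m u v w

lemma down_wl3 (m : ℕ) :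
    ∀ (k : ℕ) (u v w : V), W3Color.down m k (wl3 G (m + k) u v w) = wl3 G m u v w
  | 0, _, _, _ => rfl
  | k + 1, u, v, w => down_wl3 m k u v w

lemma map_diag_eq_filter {β : Type*} (g : V × V × V → β) :
    (Finset.univ.val.map fun u : V => g (u, u, u)) =
      ((Finset.univ : Finset (V × V × V)).val.filter fun p => p.1 = p.2.1 ∧ p.1 = p.2.2).map g := by
  have hdiag : (Finset.univ.filter fun p : V × V × V => p.1 = p.2.1 ∧ p.1 = p.2.2) =
      Finset.univ.map ⟨fun u => (u, u, u), fun a b h => congrArg Prod.fst h⟩ := by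
    ext ⟨a, b, c⟩
    simp only [Finset.mem_filter, Finset.mem_univ, true_and, Finset.mem_map]
    constructor
    · rintro ⟨rfl, rfl⟩; exact ⟨a, rfl⟩
    · rintro ⟨u, h⟩; cases h; exact ⟨rfl, rfl⟩
  rw [← Finset.filter_val, hdiag, Finset.map_val, Multiset.map_map]
  rfl

lemma map_wl3_diag_eq_filter (m : ℕ) :
    (Finset.univ.val.map fun u : V => wl3 G m u u u) =
      ((Finset.univ : Finset (V × V × V)).val.map fun p => wl3 G m p.1 p.2.1 p.2.2).filter
        fun c => c.toAtomic.1 = true ∧ c.toAtomic.2.1 = true := by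
  rw [Multiset.filter_map, map_diag_eq_filter (fun p => wl3 G m p.1 p.2.1 p.2.2)]
  congr 1
  refine Multiset.filter_congr fun p _ => ?_
  simp [toAtomic_wl3, wl3]

end WL3Colors

lemma WL3Indist.map_wl3_diag_eq {V W : Type*} [Fintype V] [Fintype W]
    {G : SimpleGraph V} {H : SimpleGraph W} (h3 : WL3Indist G H) (m : ℕ) :
    (Finset.univ.val.map fun u : V => wl3 G m u u u) =
      (Finset.univ.val.map fun x : W => wl3 H m x x x) := by
  rw [map_wl3_diag_eq_filter, map_wl3_diag_eq_filter, h3 m]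

section Factorization

variable {V W : Type*} [Fintype V] [Fintype W] (G : SimpleGraph V) (H : SimpleGraph W)

/-- The freedom in the third vertex `w` is what lets a single round of 3-WL read off a matrix
product and simulate a round of color refinement. -/
def FactorsThroughWL3At {β : Type*} (m : ℕ) (F : V → V → β) (F' : W → W → β) : Prop :=
  ∃ f : W3Color m → β,
    (∀ u v w, F u v = f (wl3 G m u v w)) ∧ ∀ x y z, F' x y = f (wl3 H m x y z)

def FactorsThroughWL3 {β : Type*} (F : V → V → β) (F' : W → W → β) : Prop :=
  ∃ m, FactorsThroughWL3At G H m F F'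

variable {G H} {β γ : Type*} {m : ℕ} {F : V → V → β} {F' : W → W → β}

lemma FactorsThroughWL3At.mono (h : FactorsThroughWL3At G H m F F') {m' : ℕ} (hm : m ≤ m') :
    FactorsThroughWL3At G H m' F F' := by
  obtain ⟨k, rfl⟩ := Nat.exists_eq_add_of_le hm
  obtain ⟨f, hG, hH⟩ := h
  exact ⟨fun c => f (c.down m k),
    fun u v w => (hG u v w).trans (congrArg f (down_wl3 G m k u v w).symm),
    fun x y z => (hH x y z).trans (congrArg f (down_wl3 H m k x y z).symm)⟩

lemma FactorsThroughWL3.exists_le (h : FactorsThroughWL3 G H F F') :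
    ∃ m₀, ∀ m, m₀ ≤ m → FactorsThroughWL3At G H m F F' :=
  let ⟨m₀, h₀⟩ := h
  ⟨m₀, fun _ hm => h₀.mono hm⟩

lemma FactorsThroughWL3.map (h : FactorsThroughWL3 G H F F') (φ : β → γ) :
    FactorsThroughWL3 G H (fun u v => φ (F u v)) (fun x y => φ (F' x y)) :=
  let ⟨m, f, hG, hH⟩ := h
  ⟨m, φ ∘ f, fun u v w => congrArg φ (hG u v w), fun x y z => congrArg φ (hH x y z)⟩

lemma FactorsThroughWL3.pi {ι : Type*} [Finite ι] {F : ι → V → V → β} {F' : ι → W → W → β}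
    (h : ∀ i, FactorsThroughWL3 G H (F i) (F' i)) :
    FactorsThroughWL3 G H (fun u v i => F i u v) (fun x y i => F' i x y) := by
  choose m₀ hm₀ using fun i => (h i).exists_le
  have := Fintype.ofFinite ι
  choose f hG hH using fun i => hm₀ i (Finset.univ.sup m₀) (Finset.le_sup (Finset.mem_univ i))
  exact ⟨_, fun c i => f i c, fun u v w => funext fun i => hG i u v w,
    fun x y z => funext fun i => hH i x y z⟩

end Factorization

section Refinement

variable {α : Type} {m : ℕ}

def refineColor (f : W3Color m → α) : (l : ℕ) → W3Color (m + l) → Color α l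
  | 0 => fun _ => ()
  | l + 1 => fun c =>
      (refineColor f l c.1, c.2.map fun t => (refineColor f l t.1, f (t.2.1.down m l)))

lemma colorFn_eq_refineColor {V : Type*} [Fintype V] {G : SimpleGraph V} {F : V → V → α}
    {f : W3Color m → α} (hF : ∀ u v w, F u v = f (wl3 G m u v w)) :
    ∀ (l : ℕ) (u v w : V), colorFn F l u = refineColor f l (wl3 G (m + l) u v w)
  | 0, _, _, _ => rfl
  | l + 1, u, v, w => by
    refine Prod.ext (colorFn_eq_refineColor hF l u v w) ?_
    change (Finset.univ.val.map fun z => (colorFn F l z, F u z)) =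
      (Finset.univ.val.map fun z => (wl3 G (m + l) z v w, wl3 G (m + l) u z w,
        wl3 G (m + l) u v z)).map fun t => (refineColor f l t.1, f (t.2.1.down m l))
    rw [Multiset.map_map]
    refine Multiset.map_congr rfl fun z _ => ?_
    simp only [Function.comp_apply, down_wl3, ← hF, ← colorFn_eq_refineColor hF l z v w]

end Refinement

section Indistinguishability

variable {V W : Type*} [Fintype V] [Fintype W] {G : SimpleGraph V} {H : SimpleGraph W}

lemma FactorsThroughWL3.nodeIndist {α : Type} {F : V → V → α} {F' : W → W → α}
    (h : FactorsThroughWL3 G H F F') (h3 : WL3Indist G H) : NodeIndist F F' := by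
  obtain ⟨m, f, hG, hH⟩ := h
  intro l
  calc Finset.univ.val.map (colorFn F l)
      = (Finset.univ.val.map fun u : V => wl3 G (m + l) u u u).map (refineColor f l) := by
        rw [Multiset.map_map]
        exact Multiset.map_congr rfl fun u _ => colorFn_eq_refineColor hG l u u u
    _ = (Finset.univ.val.map fun x : W => wl3 H (m + l) x x x).map (refineColor f l) := by
        rw [h3.map_wl3_diag_eq]
    _ = Finset.univ.val.map (colorFn F' l) := by
        rw [Multiset.map_map]
        exact (Multiset.map_congr rfl fun x _ => colorFn_eq_refineColor hH l x x x).symm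

lemma FactorsThroughWL3.trace_eq {X : Matrix V V ℝ} {X' : Matrix W W ℝ}
    (h : FactorsThroughWL3 G H X X') (h3 : WL3Indist G H) : X.trace = X'.trace := by
  obtain ⟨m, f, hG, hH⟩ := h
  calc X.trace = ((Finset.univ.val.map fun u : V => wl3 G m u u u).map f).sum := by
        rw [Multiset.map_map]
        exact Finset.sum_congr rfl fun u _ => hG u u u
    _ = ((Finset.univ.val.map fun x : W => wl3 H m x x x).map f).sum := by
        rw [h3.map_wl3_diag_eq]
    _ = X'.trace := by
        rw [Multiset.map_map]
        exact (Finset.sum_congr rfl fun x _ => hH x x x).symm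

end Indistinguishability

section MatrixEntries

variable {V : Type*} [Fintype V] (G : SimpleGraph V)

lemma mul_apply_eq_sum_wl3 {m : ℕ} {X Y : Matrix V V ℝ} {f : W3Color m → ℝ × ℝ}
    (hf : ∀ u v w, (X u v, Y u v) = f (wl3 G m u v w)) (u v w : V) :
    (X * Y) u v = ((wl3 G (m + 1) u v w).2.map fun t => (f t.2.1).1 * (f t.1).2).sum := by
  change _ = ((Finset.univ.val.map fun z => (wl3 G m z v w, wl3 G m u z w,
    wl3 G m u v z)).map fun t => (f t.2.1).1 * (f t.1).2).sum
  rw [Multiset.map_map, Matrix.mul_apply]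
  exact Finset.sum_congr rfl fun z _ => by
    simp only [Function.comp_apply, ← hf]

-- `t.2.1` is the color of `(u, z, w)`, whose fourth atomic bit is `G.Adj u z`.
lemma degree_eq_card_filter_wl3 (u v w : V) :
    G.degree u = ((wl3 G 1 u v w).2.filter fun t => t.2.1.2.2.2.1 = true).card := by
  change _ = ((Finset.univ.val.map fun z => (wl3 G 0 z v w, wl3 G 0 u z w,
    wl3 G 0 u v z)).filter fun t => t.2.1.2.2.2.1 = true).card
  rw [Multiset.filter_map, Multiset.card_map, ← SimpleGraph.card_neighborFinset_eq_degree,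
    SimpleGraph.neighborFinset_eq_filter]
  exact congrArg Multiset.card (Multiset.filter_congr fun z _ => by simp [wl3])

end MatrixEntries

section Subalgebra

variable {V W : Type*} [Fintype V] [Fintype W] {G : SimpleGraph V} {H : SimpleGraph W}
  {β γ δ : Type*} {F₁ : V → V → β} {F₁' : W → W → β} {F₂ : V → V → γ} {F₂' : W → W → γ}

lemma FactorsThroughWL3.map₂ (h₁ : FactorsThroughWL3 G H F₁ F₁')
    (h₂ : FactorsThroughWL3 G H F₂ F₂') (φ : β → γ → δ) :
    FactorsThroughWL3 G H (fun u v => φ (F₁ u v) (F₂ u v)) (fun x y => φ (F₁' x y) (F₂' x y)) := by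
  obtain ⟨m₁, h₁⟩ := h₁.exists_le
  obtain ⟨m₂, h₂⟩ := h₂.exists_le
  obtain ⟨f, hfG, hfH⟩ := h₁ _ (le_max_left m₁ m₂)
  obtain ⟨g, hgG, hgH⟩ := h₂ _ (le_max_right m₁ m₂)
  exact ⟨_, fun c => φ (f c) (g c), fun u v w => congrArg₂ φ (hfG u v w) (hgG u v w),
    fun x y z => congrArg₂ φ (hfH x y z) (hgH x y z)⟩

lemma FactorsThroughWL3.mul {X Y : Matrix V V ℝ} {X' Y' : Matrix W W ℝ}
    (hX : FactorsThroughWL3 G H X X') (hY : FactorsThroughWL3 G H Y Y') :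
    FactorsThroughWL3 G H (X * Y) (X' * Y') := by
  obtain ⟨m, f, hG, hH⟩ := hX.map₂ hY Prod.mk
  exact ⟨m + 1, fun c => (c.2.map fun t => (f t.2.1).1 * (f t.1).2).sum,
    mul_apply_eq_sum_wl3 G hG, mul_apply_eq_sum_wl3 H hH⟩

variable (G H) in
def wl3Subalgebra : Subalgebra ℝ (Matrix V V ℝ × Matrix W W ℝ) where
  carrier := {p | FactorsThroughWL3 G H p.1 p.2}
  mul_mem' hX hY := hX.mul hY
  add_mem' hX hY := hX.map₂ hY (· + ·)
  algebraMap_mem' r := ⟨0, fun c => if c.1 then r else 0,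
    fun u v _ => by simp [Matrix.algebraMap_matrix_apply, wl3],
    fun x y _ => by simp [Matrix.algebraMap_matrix_apply, wl3]⟩

lemma adjM_mem_wl3Subalgebra : (adjM G, adjM H) ∈ wl3Subalgebra G H :=
  ⟨0, fun c => if c.2.2.2.1 then 1 else 0, fun u v _ => by simp [adjM, wl3],
    fun x y _ => by simp [adjM, wl3]⟩

lemma diagonal_degree_mem_wl3Subalgebra (φ : ℕ → ℝ) :
    (Matrix.diagonal fun v => φ (G.degree v), Matrix.diagonal fun x => φ (H.degree x)) ∈
      wl3Subalgebra G H :=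
  ⟨1, fun c => if c.1.1 then φ (c.2.filter fun t => t.2.1.2.2.2.1 = true).card else 0,
    fun u v w => by
      simp only [Matrix.diagonal_apply]
      rw [← degree_eq_card_filter_wl3 G u v w]
      simp [wl3],
    fun x y z => by
      simp only [Matrix.diagonal_apply]
      rw [← degree_eq_card_filter_wl3 H x y z]
      simp [wl3]⟩

lemma matOf_mem_wl3Subalgebra (c : MatChoice) :
    (matOf c G, matOf c H) ∈ wl3Subalgebra G H := by
  have hlap : (lapM G, lapM H) ∈ wl3Subalgebra G H :=
    sub_mem (diagonal_degree_mem_wl3Subalgebra Nat.cast) adjM_mem_wl3Subalgebra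
  have hinvSqrt : (invSqrtDegM G, invSqrtDegM H) ∈ wl3Subalgebra G H :=
    diagonal_degree_mem_wl3Subalgebra fun d => (Real.sqrt d)⁻¹
  cases c with
  | adj => exact adjM_mem_wl3Subalgebra
  | lap => exact hlap
  | normLap => exact mul_mem (mul_mem hinvSqrt hlap) hinvSqrt

end Subalgebra

namespace IsSpectralDecomp

variable {n : Type*} [Fintype n] {M : Matrix n n ℝ} {Λ : Finset ℝ} {P : ℝ → Matrix n n ℝ}

lemma pow_eq (hd : IsSpectralDecomp M Λ P) (k : ℕ) : M ^ k = ∑ lam ∈ Λ, lam ^ k • P lam := by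
  induction k with
  | zero => simp [hd.sum_one]
  | succ k ih =>
    rw [pow_succ, ih, ← hd.sum_smul, Finset.sum_mul_sum]
    refine Finset.sum_congr rfl fun lam hlam => ?_
    rw [Finset.sum_eq_single_of_mem lam hlam fun mu hmu hne => by
      rw [smul_mul_smul_comm, hd.orth lam hlam mu hmu hne.symm, smul_zero]]
    rw [smul_mul_smul_comm, hd.idem lam hlam, ← pow_succ]

lemma aeval_eq (hd : IsSpectralDecomp M Λ P) (q : ℝ[X]) :
    aeval M q = ∑ lam ∈ Λ, q.eval lam • P lam := by
  simp only [aeval_eq_sum_range, hd.pow_eq, Finset.smul_sum, smul_smul, eval_eq_sum_range,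
    Finset.sum_smul]
  exact Finset.sum_comm

lemma trace_aeval (hd : IsSpectralDecomp M Λ P) (q : ℝ[X]) :
    (aeval M q).trace = ∑ lam ∈ Λ, q.eval lam * (P lam).trace := by
  simp only [hd.aeval_eq, Matrix.trace_sum, Matrix.trace_smul, smul_eq_mul]

lemma eq_aeval_lagrangeBasis (hd : IsSpectralDecomp M Λ P) {lam : ℝ} (hlam : lam ∈ Λ) :
    P lam = aeval M (Lagrange.basis Λ id lam) := by
  rw [hd.aeval_eq, Finset.sum_eq_single_of_mem lam hlam fun mu hmu hne => by
    rw [← id_eq mu, Lagrange.eval_basis_of_ne hne.symm hmu, zero_smul]]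
  have hself : (Lagrange.basis Λ id lam).eval lam = 1 :=
    Lagrange.eval_basis_self (Set.injOn_id _) hlam
  rw [hself, one_smul]

lemma trace_pos (hd : IsSpectralDecomp M Λ P) {lam : ℝ} (hlam : lam ∈ Λ) :
    0 < (P lam).trace := by
  have htrace : (P lam).trace = ((P lam)ᴴ * P lam).trace := by
    rw [Matrix.conjTranspose_eq_transpose_of_trivial, hd.symm lam hlam, hd.idem lam hlam]
  rw [htrace]
  exact (Matrix.posSemidef_conjTranspose_mul_self _).trace_nonneg.lt_of_ne'
    (Matrix.trace_conjTranspose_mul_self_eq_zero_iff.not.mpr (hd.nonzero lam hlam))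

/-- `q = ∏_{μ ∈ Λ'} (X - μ)` kills `N`, so `tr (q(M)²) = ∑ q(λ)² tr P_λ` vanishes, and
`tr P_λ > 0` forces `q(λ) = 0`. -/
lemma subset_of_trace_aeval_eq {n' : Type*} [Fintype n'] {N : Matrix n' n' ℝ} {Λ' : Finset ℝ}
    {Q : ℝ → Matrix n' n' ℝ} (hM : IsSpectralDecomp M Λ P) (hN : IsSpectralDecomp N Λ' Q)
    (htr : ∀ q : ℝ[X], (aeval M q).trace = (aeval N q).trace) : Λ ⊆ Λ' := by
  intro lam hlam
  set q : ℝ[X] := ∏ mu ∈ Λ', (X - C mu)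
  have hq : ∀ mu ∈ Λ', q.eval mu = 0 := fun mu hmu => by
    rw [eval_prod]
    exact Finset.prod_eq_zero hmu (by simp)
  have hsum : ∑ mu ∈ Λ, (q ^ 2).eval mu * (P mu).trace = 0 := by
    rw [← hM.trace_aeval, htr, hN.trace_aeval]
    exact Finset.sum_eq_zero fun mu hmu => by rw [eval_pow, hq mu hmu]; ring
  have hterm := (Finset.sum_eq_zero_iff_of_nonneg fun mu hmu =>
    mul_nonneg (by rw [eval_pow]; positivity) (hM.trace_pos hmu).le).mp hsum lam hlam
  rw [eval_pow, mul_eq_zero, pow_eq_zero_iff two_ne_zero] at hterm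
  have hqlam : q.eval lam = 0 := hterm.resolve_right (hM.trace_pos hlam).ne'
  rw [eval_prod, Finset.prod_eq_zero_iff] at hqlam
  obtain ⟨mu, hmu, hzero⟩ := hqlam
  rw [eval_sub, eval_X, eval_C, sub_eq_zero] at hzero
  exact hzero ▸ hmu

end IsSpectralDecomp

section Assembly

variable {V W : Type*} [Fintype V] [Fintype W] {G : SimpleGraph V} {H : SimpleGraph W}

lemma FactorsThroughWL3.projInv {Λ : Finset ℝ} {P : ℝ → Matrix V V ℝ} {P' : ℝ → Matrix W W ℝ}
    (h : ∀ lam ∈ Λ, FactorsThroughWL3 G H (P lam) (P' lam)) :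
    FactorsThroughWL3 G H (projInv Λ P) (projInv Λ P') := by
  have hpi := FactorsThroughWL3.pi (ι := Λ) fun lam => h lam lam.2
  have key := hpi.map fun g => Λ.val.attach.map fun lam => (lam.1, g lam)
  convert key using 3 <;> exact (Multiset.attach_map_val' _ _).symm

lemma aeval_matOf_mem_wl3Subalgebra (c : MatChoice) (q : ℝ[X]) :
    (aeval (matOf c G) q, aeval (matOf c H) q) ∈ wl3Subalgebra G H := by
  have h := (aeval (⟨_, matOf_mem_wl3Subalgebra c⟩ : wl3Subalgebra G H) q).2
  rwa [aeval_subalgebra_coe, aeval_prod_apply] at h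

end Assembly

theorem wl3_bounds_epwl_general {V W : Type*} [Fintype V] [Fintype W]
    (G : SimpleGraph V) (H : SimpleGraph W)
    (c : MatChoice)
    (ΛG : Finset ℝ) (PG : ℝ → Matrix V V ℝ)
    (hPG : IsSpectralDecomp (matOf c G) ΛG PG)
    (ΛH : Finset ℝ) (PH : ℝ → Matrix W W ℝ)
    (hPH : IsSpectralDecomp (matOf c H) ΛH PH)
    (h3 : WL3Indist G H) :
    NodeIndist (projInv ΛG PG) (projInv ΛH PH) := by
  have hpoly := aeval_matOf_mem_wl3Subalgebra (G := G) (H := H) c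
  have htrace (q : ℝ[X]) : (aeval (matOf c G) q).trace = (aeval (matOf c H) q).trace :=
    (hpoly q).trace_eq h3
  obtain rfl : ΛG = ΛH :=
    (hPG.subset_of_trace_aeval_eq hPH htrace).antisymm
      (hPH.subset_of_trace_aeval_eq hPG fun q => (htrace q).symm)
  have hproj : ∀ lam ∈ ΛG, FactorsThroughWL3 G H (PG lam) (PH lam) := fun lam hlam => by
    rw [hPG.eq_aeval_lagrangeBasis hlam, hPH.eq_aeval_lagrangeBasis hlam]
    exact hpoly _
  exact (FactorsThroughWL3.projInv hproj).nodeIndist h3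

/-- For each `M ∈ {A, L, L̂}`: if `G` and `H` are
3-WL-indistinguishable, then they are EPWL-indistinguishable with respect
to `M`. -/
theorem wl3_bounds_epwl {V W : Type*} [Fintype V] [Fintype W]
    (G : SimpleGraph V) (H : SimpleGraph W)
    (hG : ∀ v, 0 < G.degree v) (hH : ∀ w, 0 < H.degree w)
    (c : MatChoice)
    (ΛG : Finset ℝ) (PG : ℝ → Matrix V V ℝ)
    (hPG : IsSpectralDecomp (matOf c G) ΛG PG)
    (ΛH : Finset ℝ) (PH : ℝ → Matrix W W ℝ)
    (hPH : IsSpectralDecomp (matOf c H) ΛH PH)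
    (h3 : WL3Indist G H) :
    NodeIndist (projInv ΛG PG) (projInv ΛH PH) :=
  wl3_bounds_epwl_general G H c ΛG PG hPG ΛH PH hPH h3

end EPWL
end
end

section
/- For each choice of graph matrix M ∈ {adjacency matrix A, Laplacian L, normalized Laplacian L̂}: for any two finite simple graphs G and H (with no isolated vertices) and vertices u, v ∈ V_G and x, y ∈ V_H, if 𝒫^{M_G}(u,v) = 𝒫^{M_H}(x,y) (equality of multisets), then u = v if and only if x = y, and {u,v} ∈ E_G if and only if {x,y} ∈ E_H. (The eigenspace projection invariant determines the atomic type of a vertex pair.) -/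
open scoped Classical
open Matrix BigOperators

noncomputable section

namespace EPWL

/-- Off-diagonal, adjacency is detected by nonvanishing of the matrix entry. -/
lemma adj_iff_entry_ne_zero {V : Type*} [Fintype V] (c : MatChoice)
    (G : SimpleGraph V) (hG : ∀ v, 0 < G.degree v) (u v : V) (huv : u ≠ v) :
    G.Adj u v ↔ matOf c G u v ≠ 0 := by
  have hlap : lapM G u v = -(if G.Adj u v then (1 : ℝ) else 0) := by
    simp [lapM, degM, adjM, Matrix.sub_apply, Matrix.diagonal_apply_ne _ huv,
      SimpleGraph.adjMatrix_apply]
  cases c with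
  | adj =>
    simp [matOf, adjM, SimpleGraph.adjMatrix_apply]
  | lap =>
    by_cases hA : G.Adj u v <;> simp [matOf, hlap, hA]
  | normLap =>
    have hsu : (Real.sqrt (G.degree u))⁻¹ ≠ 0 :=
      inv_ne_zero (ne_of_gt (Real.sqrt_pos.mpr (by exact_mod_cast hG u)))
    have hsv : (Real.sqrt (G.degree v))⁻¹ ≠ 0 :=
      inv_ne_zero (ne_of_gt (Real.sqrt_pos.mpr (by exact_mod_cast hG v)))
    have : normLapM G u v =
        (Real.sqrt (G.degree u))⁻¹ * lapM G u v * (Real.sqrt (G.degree v))⁻¹ := by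
      simp [normLapM, invSqrtDegM, Matrix.diagonal_mul, Matrix.mul_diagonal]
    rw [show matOf MatChoice.normLap G = normLapM G from rfl, this]
    by_cases hA : G.Adj u v <;> simp [hlap, hA, hsu, hsv]

/-- For each `M ∈ {A, L, L̂}`: the eigenspace projection
invariant of a vertex pair determines its atomic type. -/
theorem projInv_determines_atp {V W : Type*} [Fintype V] [Fintype W]
    (G : SimpleGraph V) (H : SimpleGraph W)
    (hG : ∀ v, 0 < G.degree v) (hH : ∀ w, 0 < H.degree w)
    (c : MatChoice)
    (ΛG : Finset ℝ) (PG : ℝ → Matrix V V ℝ)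
    (hPG : IsSpectralDecomp (matOf c G) ΛG PG)
    (ΛH : Finset ℝ) (PH : ℝ → Matrix W W ℝ)
    (hPH : IsSpectralDecomp (matOf c H) ΛH PH)
    (u v : V) (x y : W)
    (h : projInv ΛG PG u v = projInv ΛH PH x y) :
    (u = v ↔ x = y) ∧ (G.Adj u v ↔ H.Adj x y) := by
  classical
  have key : ∀ (F : ℝ → ℝ → ℝ),
      ∑ lam ∈ ΛG, F lam (PG lam u v) = ∑ lam ∈ ΛH, F lam (PH lam x y) := by
    intro F
    have := congrArg (fun m => (m.map (fun p : ℝ × ℝ => F p.1 p.2)).sum) h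
    simp only [projInv, Multiset.map_map, Function.comp] at this
    exact this
  have h1 : (1 : Matrix V V ℝ) u v = (1 : Matrix W W ℝ) x y := by
    rw [← hPG.sum_one, ← hPH.sum_one]
    simpa [Matrix.sum_apply] using key (fun _ p => p)
  have hM : matOf c G u v = matOf c H x y := by
    rw [← hPG.sum_smul, ← hPH.sum_smul]
    simpa [Matrix.sum_apply, Matrix.smul_apply, smul_eq_mul] using
      key (fun lam p => lam * p)
  have heq : u = v ↔ x = y := by
    rw [Matrix.one_apply, Matrix.one_apply] at h1
    by_cases huv : u = v <;> by_cases hxy : x = y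
    · simp [huv, hxy]
    · simp [huv, hxy] at h1
    · simp [huv, hxy] at h1
    · simp [huv, hxy]
  refine ⟨heq, ?_⟩
  by_cases huv : u = v
  · have hxy : x = y := heq.mp huv
    subst huv; subst hxy
    simp
  · have hxy : x ≠ y := fun hx => huv (heq.mpr hx)
    rw [adj_iff_entry_ne_zero c G hG u v huv,
      adj_iff_entry_ne_zero c H hH x y hxy, hM]

end EPWL
end
end

section
/- For each choice of graph matrix M ∈ {adjacency matrix A, Laplacian L, normalized Laplacian L̂}: for any two finite simple graphs G and H (with no isolated vertices) and vertices u ∈ V_G and x ∈ V_H, if the multisets {{𝒫^{M_G}(u,v) : v ∈ V_G}} and {{𝒫^{M_H}(x,y) : y ∈ V_H}} are equal, then 𝒫^{M_G}(u,u) = 𝒫^{M_H}(x,x). (After one iteration of EPWL, a node's color determines its diagonal projection values.) -/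
open scoped Classical
open Matrix BigOperators

noncomputable section

namespace EPWL

/-- Diagonal of a symmetric idempotent matrix is the sum of squared row entries. -/
lemma diag_eq_sum_sq {n : Type*} [Fintype n] (P : Matrix n n ℝ)
    (hs : Pᵀ = P) (hi : P * P = P) (u : n) :
    P u u = ∑ v, (P u v) ^ 2 := by
  conv_lhs => rw [← hi]
  rw [Matrix.mul_apply]
  refine Finset.sum_congr rfl fun v _ => ?_
  have hvu : P v u = P u v := by conv_lhs => rw [← hs, Matrix.transpose_apply]
  rw [hvu, sq]

/-- The feature extractor: sum of squared second coordinates at first coordinate `lam`. -/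
def featF (lam : ℝ) (s : Multiset (ℝ × ℝ)) : ℝ :=
  (s.map fun p : ℝ × ℝ => if p.1 = lam then p.2 ^ 2 else 0).sum

lemma featF_projInv {n : Type*} (Λ : Finset ℝ) (P : ℝ → Matrix n n ℝ)
    (u v : n) (lam : ℝ) (hlam : lam ∈ Λ) :
    featF lam (projInv Λ P u v) = (P lam u v) ^ 2 := by
  unfold featF projInv
  rw [Multiset.map_map]
  have : ∑ mu ∈ Λ, (if mu = lam then (P mu u v) ^ 2 else 0) = (P lam u v) ^ 2 := by
    rw [Finset.sum_ite_eq' Λ lam (fun mu => (P mu u v) ^ 2), if_pos hlam]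
  exact this

/-- For each `M ∈ {A, L, L̂}`: if the multisets
`{{𝒫(u,v) : v}}` and `{{𝒫(x,y) : y}}` agree, then the diagonal invariants
agree: `𝒫(u,u) = 𝒫(x,x)`. -/
theorem projInv_multiset_determines_diag {V W : Type*} [Fintype V] [Fintype W]
    (G : SimpleGraph V) (H : SimpleGraph W)
    (hG : ∀ v, 0 < G.degree v) (hH : ∀ w, 0 < H.degree w)
    (c : MatChoice)
    (ΛG : Finset ℝ) (PG : ℝ → Matrix V V ℝ)
    (hPG : IsSpectralDecomp (matOf c G) ΛG PG)
    (ΛH : Finset ℝ) (PH : ℝ → Matrix W W ℝ)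
    (hPH : IsSpectralDecomp (matOf c H) ΛH PH)
    (u : V) (x : W)
    (h : (Finset.univ.val.map fun v => projInv ΛG PG u v) =
         (Finset.univ.val.map fun y => projInv ΛH PH x y)) :
    projInv ΛG PG u u = projInv ΛH PH x x := by
  classical
  -- First, the eigenvalue sets agree.
  have hmem : projInv ΛG PG u u ∈ Finset.univ.val.map fun y => projInv ΛH PH x y := by
    rw [← h]
    exact Multiset.mem_map_of_mem _ (Finset.mem_univ_val u)
  obtain ⟨y, -, hy⟩ := Multiset.mem_map.1 hmem
  have hval : ΛH.val = ΛG.val := by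
    have := congrArg (Multiset.map Prod.fst) hy
    simpa [projInv, Multiset.map_map, Function.comp] using this
  have hΛ : ΛG = ΛH := Finset.val_injective hval.symm
  -- Diagonal values agree for each eigenvalue.
  have key : ∀ lam ∈ ΛG, PG lam u u = PH lam x x := by
    intro lam hlam
    have hlamH : lam ∈ ΛH := hΛ ▸ hlam
    have hsum := congrArg (fun s : Multiset (Multiset (ℝ × ℝ)) =>
      (s.map (featF lam)).sum) h
    simp only [Multiset.map_map, Function.comp] at hsum
    have hGside : ((Finset.univ.val.map fun v => featF lam (projInv ΛG PG u v)).sum)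
        = ∑ v, (PG lam u v) ^ 2 := by
      refine congrArg Multiset.sum (Multiset.map_congr rfl fun v _ => ?_)
      exact featF_projInv ΛG PG u v lam hlam
    have hHside : ((Finset.univ.val.map fun y => featF lam (projInv ΛH PH x y)).sum)
        = ∑ y, (PH lam x y) ^ 2 := by
      refine congrArg Multiset.sum (Multiset.map_congr rfl fun y _ => ?_)
      exact featF_projInv ΛH PH x y lam hlamH
    rw [hGside, hHside] at hsum
    rw [diag_eq_sum_sq (PG lam) (hPG.symm lam hlam) (hPG.idem lam hlam) u,
      diag_eq_sum_sq (PH lam) (hPH.symm lam hlamH) (hPH.idem lam hlamH) x]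
    exact hsum
  unfold projInv
  rw [hΛ]
  exact Multiset.map_congr rfl fun lam hl => by
    rw [key lam (hΛ ▸ (Finset.mem_def.2 hl))]

end EPWL
end
end

section
/- If two finite simple graphs G and H (with no isolated vertices) are EPWL-indistinguishable with respect to the normalized Laplacian L̂, then G and H are GD-WL-indistinguishable with respect to the resistance distance RD. (GD-WL with resistance distance is upper bounded in expressive power by EPWL with L̂.) -/
open scoped Classical
open Matrix BigOperators

noncomputable section

namespace EPWL

/-!
The feature `𝒫^{L̂}(u,v)` determines the `(u,v)` entry of every spectral function
`φ(L̂) = ∑_λ φ(λ) P_λ`. Taking `φ = 1`, `φ = id`, `φ = 1_{0}` and `φ(λ) = λ⁻¹` gives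
`I(u,v)`, `L̂(u,v)`, the projection onto `ker L̂` (nonzero at `(u,v)` exactly when `u` and `v`
are connected) and the pseudoinverse `L̂⁺`; the first two also give the degree of `u` from its
first EPWL color. Since `L = D^{1/2} L̂ D^{1/2}`, the matrix `Z = D^{-1/2} L̂⁺ D^{-1/2}`
satisfies `L Z w = w` for `w = e_u - e_v` with `u, v` connected, and on such `w` every
generalized inverse of `L` has the same quadratic form. Hence
`RD(u,v) = L̂⁺(u,u)/d_u + L̂⁺(v,v)/d_v - 2 L̂⁺(u,v)/√(d_u d_v)`
is a fixed function of the first EPWL colors of `u` and `v` and of `𝒫^{L̂}(u,v)`, so each round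
of GD-WL is simulated by one more round of EPWL.
-/

namespace Color

def down {α : Type} : (l : ℕ) → Color α (l + 1) → Color α l
  | 0, _ => ()
  | l + 1, c => (down l c.1, c.2.map fun q => (down l q.1, q.2))

def toOne {α : Type} : (l : ℕ) → Color α (l + 1) → Color α 1
  | 0, c => c
  | l + 1, c => toOne l (down (l + 1) c)

def relabel {α β : Type} (F : Color α 1 → Color α 1 → α → β) :
    (l : ℕ) → Color α (l + 1) → Color β l
  | 0, _ => ()
  | l + 1, c =>
      (relabel F l c.1,
        c.2.map fun q => (relabel F l q.1, F (toOne l c.1) (toOne l q.1) q.2))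

end Color

section Refinement

variable {V : Type*} [Fintype V] {α β : Type}

theorem colorFn_succ (f : V → V → α) (l : ℕ) (u : V) :
    colorFn f (l + 1) u = (colorFn f l u, Finset.univ.val.map fun v => (colorFn f l v, f u v)) :=
  rfl

theorem down_colorFn (f : V → V → α) :
    ∀ (l : ℕ) (u : V), Color.down l (colorFn f (l + 1) u) = colorFn f l u
  | 0, _ => rfl
  | l + 1, u => by
      simp only [colorFn_succ f (l + 1), Color.down, Multiset.map_map, Function.comp_def,
        down_colorFn f l]
      rfl

theorem toOne_colorFn (f : V → V → α) :
    ∀ (l : ℕ) (u : V), Color.toOne l (colorFn f (l + 1) u) = colorFn f 1 u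
  | 0, _ => rfl
  | l + 1, u => by rw [Color.toOne, down_colorFn, toOne_colorFn f l]

theorem relabel_colorFn (F : Color α 1 → Color α 1 → α → β) {f : V → V → α}
    {f' : V → V → β} (hf : ∀ u v, f' u v = F (colorFn f 1 u) (colorFn f 1 v) (f u v)) :
    ∀ (l : ℕ) (u : V), Color.relabel F l (colorFn f (l + 1) u) = colorFn f' l u
  | 0, _ => rfl
  | l + 1, u => by
      simp only [colorFn_succ _ (l + 1), Color.relabel, Multiset.map_map, Function.comp_def,
        relabel_colorFn F hf l, toOne_colorFn, ← hf]
      rfl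

theorem NodeIndist.of_feature_eq {W : Type*} [Fintype W]
    (F : Color α 1 → Color α 1 → α → β) {f : V → V → α} {g : W → W → α}
    {f' : V → V → β} {g' : W → W → β}
    (hf : ∀ u v, f' u v = F (colorFn f 1 u) (colorFn f 1 v) (f u v))
    (hg : ∀ u v, g' u v = F (colorFn g 1 u) (colorFn g 1 v) (g u v))
    (h : NodeIndist f g) : NodeIndist f' g' := by
  intro l
  have hf' : colorFn f' l = Color.relabel F l ∘ colorFn f (l + 1) :=
    funext fun u => (relabel_colorFn F hf l u).symm
  have hg' : colorFn g' l = Color.relabel F l ∘ colorFn g (l + 1) :=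
    funext fun u => (relabel_colorFn F hg l u).symm
  rw [hf', hg', ← Multiset.map_map, ← Multiset.map_map, h (l + 1)]

end Refinement

section SpectralCalculus

variable {n : Type*} {Λ : Finset ℝ} {P : ℝ → Matrix n n ℝ}

/-- `φ(M)` for the spectral decomposition `M = ∑ λ P_λ`. -/
def specFun (Λ : Finset ℝ) (P : ℝ → Matrix n n ℝ) (φ : ℝ → ℝ) : Matrix n n ℝ :=
  ∑ lam ∈ Λ, φ lam • P lam

def specEval (φ : ℝ → ℝ) (m : Multiset (ℝ × ℝ)) : ℝ :=
  (m.map fun p => φ p.1 * p.2).sum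

theorem specEval_projInv (φ : ℝ → ℝ) (u v : n) :
    specEval φ (projInv Λ P u v) = specFun Λ P φ u v := by
  simp only [specEval, projInv, specFun, Multiset.map_map, Function.comp_def,
    Matrix.sum_apply, Matrix.smul_apply, smul_eq_mul]
  rfl

theorem specFun_sub (φ ψ : ℝ → ℝ) :
    specFun Λ P φ - specFun Λ P ψ = specFun Λ P (φ - ψ) := by
  simp only [specFun, ← Finset.sum_sub_distrib, Pi.sub_apply, sub_smul]

variable [Fintype n] {M : Matrix n n ℝ}

theorem IsSpectralDecomp.specFun_one (hP : IsSpectralDecomp M Λ P) : specFun Λ P 1 = 1 := by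
  simpa only [specFun, Pi.one_apply, one_smul] using hP.sum_one

theorem IsSpectralDecomp.specFun_id (hP : IsSpectralDecomp M Λ P) : specFun Λ P id = M :=
  hP.sum_smul

theorem IsSpectralDecomp.specFun_mul (hP : IsSpectralDecomp M Λ P) (φ ψ : ℝ → ℝ) :
    specFun Λ P φ * specFun Λ P ψ = specFun Λ P (φ * ψ) := by
  rw [specFun, specFun, Finset.sum_mul]
  refine Finset.sum_congr rfl fun a ha => ?_
  rw [Finset.mul_sum, Finset.sum_eq_single a
      (fun b hb hba => by rw [smul_mul_smul_comm, hP.orth a ha b hb (Ne.symm hba), smul_zero])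
      (fun h => absurd ha h),
    smul_mul_smul_comm, hP.idem a ha, Pi.mul_apply]

theorem IsSpectralDecomp.specFun_transpose (hP : IsSpectralDecomp M Λ P) (φ : ℝ → ℝ) :
    (specFun Λ P φ)ᵀ = specFun Λ P φ := by
  rw [specFun, Matrix.transpose_sum]
  exact Finset.sum_congr rfl fun a ha => by rw [Matrix.transpose_smul, hP.symm a ha]

def kerProj (Λ : Finset ℝ) (P : ℝ → Matrix n n ℝ) : Matrix n n ℝ :=
  specFun Λ P fun x => if x = 0 then 1 else 0

/-- The pseudoinverse `M⁺ = ∑_{λ ≠ 0} λ⁻¹ P_λ`; Lean's `0⁻¹ = 0` drops the kernel. -/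
def pinv (Λ : Finset ℝ) (P : ℝ → Matrix n n ℝ) : Matrix n n ℝ :=
  specFun Λ P fun x => x⁻¹

theorem IsSpectralDecomp.mul_kerProj (hP : IsSpectralDecomp M Λ P) : M * kerProj Λ P = 0 := by
  rw [← hP.specFun_id, kerProj, hP.specFun_mul]
  have hvanish : (id * fun x : ℝ => if x = 0 then (1 : ℝ) else 0) = 0 := by
    funext x; by_cases hx : x = 0 <;> simp [hx]
  rw [hvanish]
  simp [specFun]

theorem IsSpectralDecomp.one_sub_kerProj (hP : IsSpectralDecomp M Λ P) :
    1 - kerProj Λ P = specFun Λ P fun x => x * x⁻¹ := by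
  rw [← hP.specFun_one, kerProj, specFun_sub]
  congr 1
  funext x; by_cases hx : x = 0 <;> simp [hx]

theorem IsSpectralDecomp.mul_pinv (hP : IsSpectralDecomp M Λ P) :
    M * pinv Λ P = 1 - kerProj Λ P := by
  rw [← hP.specFun_id, pinv, hP.specFun_mul, hP.one_sub_kerProj]
  rfl

theorem IsSpectralDecomp.kerProj_mul_of_mul_eq_zero (hP : IsSpectralDecomp M Λ P)
    {N : Matrix n n ℝ} (hN : M * N = 0) : kerProj Λ P * N = N := by
  have hYM : pinv Λ P * M = 1 - kerProj Λ P := by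
    rw [← hP.specFun_id, pinv, hP.specFun_mul, hP.one_sub_kerProj, mul_comm]
    rfl
  calc kerProj Λ P * N = N - (1 - kerProj Λ P) * N := by
        rw [Matrix.sub_mul, Matrix.one_mul, sub_sub_cancel]
    _ = N := by rw [← hYM, Matrix.mul_assoc, hN, Matrix.mul_zero, sub_zero]

end SpectralCalculus

section MoorePenrose

variable {n : Type*} [Fintype n] {B X Y : Matrix n n ℝ}

theorem IsMoorePenrose.unique (hX : IsMoorePenrose B X) (hY : IsMoorePenrose B Y) : X = Y := by
  obtain ⟨hX1, hX2, hX3, hX4⟩ := hX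
  obtain ⟨hY1, hY2, hY3, hY4⟩ := hY
  have hBX : Bᵀ * Xᵀ * Bᵀ = Bᵀ := by
    rw [← Matrix.transpose_mul, ← Matrix.transpose_mul, ← Matrix.mul_assoc, hX1]
  have hBY : Bᵀ * Yᵀ * Bᵀ = Bᵀ := by
    rw [← Matrix.transpose_mul, ← Matrix.transpose_mul, ← Matrix.mul_assoc, hY1]
  have hXBY : X = X * B * Y :=
    calc X = X * (B * X)ᵀ := by rw [hX3, ← Matrix.mul_assoc, hX2]
      _ = X * Xᵀ * (Bᵀ * Yᵀ * Bᵀ) := by rw [hBY, Matrix.transpose_mul, Matrix.mul_assoc]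
      _ = X * (B * X)ᵀ * (B * Y)ᵀ := by simp only [Matrix.transpose_mul, Matrix.mul_assoc]
      _ = X * B * Y := by
          rw [hX3, hY3]
          simp only [← Matrix.mul_assoc]
          rw [hX2]
  have hYXB : Y = X * B * Y :=
    calc Y = (Y * B)ᵀ * Y := by rw [hY4, hY2]
      _ = (Bᵀ * Xᵀ * Bᵀ) * Yᵀ * Y := by rw [hBX, Matrix.transpose_mul]
      _ = (X * B)ᵀ * (Y * B)ᵀ * Y := by simp only [Matrix.transpose_mul, Matrix.mul_assoc]
      _ = X * B * Y := by
          rw [hX4, hY4]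
          simp only [Matrix.mul_assoc]
          rw [← Matrix.mul_assoc Y B Y, hY2]
  exact hXBY.trans hYXB.symm

theorem IsMoorePenrose.transpose (hB : Bᵀ = B) (hX : IsMoorePenrose B X) :
    IsMoorePenrose B Xᵀ := by
  obtain ⟨h1, h2, h3, h4⟩ := hX
  refine ⟨?_, ?_, ?_, ?_⟩
  · conv_rhs => rw [← hB, ← h1]
    simp only [Matrix.transpose_mul, hB, Matrix.mul_assoc]
  · conv_rhs => rw [← h2]
    simp only [Matrix.transpose_mul, hB, Matrix.mul_assoc]
  · rw [Matrix.transpose_mul, Matrix.transpose_transpose, hB, ← h4, Matrix.transpose_mul, hB]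
  · rw [Matrix.transpose_mul, Matrix.transpose_transpose, hB, ← h3, Matrix.transpose_mul, hB]

theorem IsMoorePenrose.transpose_eq (hB : Bᵀ = B) (hX : IsMoorePenrose B X) : Xᵀ = X :=
  (hX.transpose hB).unique hX

theorem dotProduct_mulVec_eq_of_mul_mul_eq (hB : Bᵀ = B) (hX : B * X * B = B)
    {Z : Matrix n n ℝ} {w : n → ℝ} (hw : B *ᵥ (Z *ᵥ w) = w) :
    w ⬝ᵥ (X *ᵥ w) = w ⬝ᵥ (Z *ᵥ w) := by
  set a := Z *ᵥ w
  calc w ⬝ᵥ (X *ᵥ w) = (B *ᵥ a) ⬝ᵥ (X *ᵥ (B *ᵥ a)) := by rw [hw]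
    _ = a ⬝ᵥ (B *ᵥ (X *ᵥ (B *ᵥ a))) := by
        rw [Matrix.dotProduct_mulVec a B, ← Matrix.mulVec_transpose, hB]
    _ = a ⬝ᵥ ((B * X * B) *ᵥ a) := by
        rw [Matrix.mulVec_mulVec, Matrix.mulVec_mulVec, Matrix.mul_assoc]
    _ = w ⬝ᵥ a := by rw [hX, hw, dotProduct_comm]

end MoorePenrose

theorem dotProduct_single_sub_mulVec {n : Type*} [Fintype n] {Z : Matrix n n ℝ} (hZ : Zᵀ = Z)
    (u v : n) :
    (Pi.single u 1 - Pi.single v 1) ⬝ᵥ (Z *ᵥ (Pi.single u 1 - Pi.single v 1))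
      = Z u u + Z v v - 2 * Z u v := by
  have hvu : Z v u = Z u v := by rw [← Matrix.transpose_apply Z, hZ]
  rw [Matrix.mulVec_sub, Matrix.mulVec_single_one, Matrix.mulVec_single_one,
    sub_dotProduct, single_dotProduct, single_dotProduct]
  simp only [Pi.sub_apply, Matrix.col_apply, one_mul, hvu]
  ring
section Graph

variable {V : Type*} [Fintype V] (G : SimpleGraph V)

theorem lapM_transpose : (lapM G)ᵀ = lapM G :=
  SimpleGraph.isSymm_lapMatrix (R := ℝ) G

theorem lapM_mul_eq_zero_iff {K : Matrix V V ℝ} :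
    lapM G * K = 0 ↔ ∀ i j k, G.Reachable i j → K i k = K j k := by
  have hcol : ∀ k,
      lapM G *ᵥ (fun j => K j k) = 0 ↔ ∀ i j, G.Reachable i j → K i k = K j k :=
    fun k => G.lapMatrix_mulVec_eq_zero_iff_forall_reachable
  constructor
  · intro hK i j k hij
    exact (hcol k).1 (funext fun i => congrFun (congrFun hK i) k) i j hij
  · intro hK
    ext i k
    exact congrFun ((hcol k).2 fun i j hij => hK i j k hij) i

theorem lapM_apply_of_ne {u v : V} (h : u ≠ v) :
    lapM G u v = if G.Adj u v then -1 else 0 := by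
  by_cases hadj : G.Adj u v <;>
    simp [lapM, degM, adjM, Matrix.diagonal_apply_ne _ h, hadj]

theorem sqrt_degree_pos (hG : ∀ v, 0 < G.degree v) (v : V) : 0 < √(G.degree v : ℝ) :=
  Real.sqrt_pos.2 (Nat.cast_pos.2 (hG v))

theorem normLapM_apply (u v : V) :
    normLapM G u v = (√(G.degree u : ℝ))⁻¹ * lapM G u v * (√(G.degree v : ℝ))⁻¹ := by
  rw [normLapM, invSqrtDegM, Matrix.mul_diagonal, Matrix.diagonal_mul]

theorem normLapM_apply_ne_zero_iff (hG : ∀ v, 0 < G.degree v) {u v : V} (h : u ≠ v) :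
    normLapM G u v ≠ 0 ↔ G.Adj u v := by
  have hu := (sqrt_degree_pos G hG u).ne'
  have hv := (sqrt_degree_pos G hG v).ne'
  rw [normLapM_apply, lapM_apply_of_ne G h]
  by_cases hadj : G.Adj u v <;> simp [hadj, hu, hv]

def vol (u : V) : ℝ :=
  ∑ w ∈ Finset.univ.filter (G.Reachable u), (G.degree w : ℝ)

theorem vol_pos (hG : ∀ v, 0 < G.degree v) (u : V) : 0 < vol G u :=
  Finset.sum_pos' (fun _ _ => Nat.cast_nonneg _)
    ⟨u, by simp, Nat.cast_pos.2 (hG u)⟩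

theorem vol_eq_of_reachable {u v : V} (h : G.Reachable u v) : vol G u = vol G v := by
  unfold vol
  congr 1
  ext w
  simp only [Finset.mem_filter, Finset.mem_univ, true_and]
  exact ⟨h.symm.trans, h.trans⟩

def compAvg : Matrix V V ℝ :=
  Matrix.of fun u v => if G.Reachable u v then (vol G u)⁻¹ else 0

theorem compAvg_apply_eq_of_reachable {i j : V} (h : G.Reachable i j) (k : V) :
    compAvg G i k = compAvg G j k := by
  simp only [compAvg, Matrix.of_apply, vol_eq_of_reachable G h]
  by_cases hk : G.Reachable i k
  · rw [if_pos hk, if_pos (h.symm.trans hk)]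
  · rw [if_neg hk, if_neg fun hjk => hk (h.trans hjk)]

theorem compAvg_comm (i k : V) : compAvg G i k = compAvg G k i := by
  simp only [compAvg, Matrix.of_apply]
  by_cases hk : G.Reachable i k
  · rw [if_pos hk, if_pos hk.symm, vol_eq_of_reachable G hk]
  · rw [if_neg hk, if_neg fun hki => hk hki.symm]

theorem compAvg_transpose : (compAvg G)ᵀ = compAvg G :=
  Matrix.ext fun i k => compAvg_comm G k i

theorem lapM_mul_compAvg : lapM G * compAvg G = 0 :=
  (lapM_mul_eq_zero_iff G).2 fun _ _ k h => compAvg_apply_eq_of_reachable G h k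

theorem compAvg_mulVec_single_sub {u v : V} (h : G.Reachable u v) :
    compAvg G *ᵥ (Pi.single u 1 - Pi.single v 1) = 0 := by
  ext i
  rw [Matrix.mulVec_sub, Matrix.mulVec_single_one, Matrix.mulVec_single_one, Pi.sub_apply,
    Matrix.col_apply, Matrix.col_apply, compAvg_comm G i u, compAvg_comm G i v,
    compAvg_apply_eq_of_reachable G h, sub_self, Pi.zero_apply]

/-- Columns of a `K` with `L K = 0` are constant on components, so averaging them against the
degree weights returns them. -/
theorem compAvg_mul_degM_mul (hG : ∀ v, 0 < G.degree v) {K : Matrix V V ℝ}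
    (hK : lapM G * K = 0) : compAvg G * (degM G * K) = K := by
  have hconst := (lapM_mul_eq_zero_iff G).1 hK
  ext i k
  calc (compAvg G * (degM G * K)) i k
      = ∑ w ∈ Finset.univ.filter (G.Reachable i), (vol G i)⁻¹ * (G.degree w * K i k) := by
        rw [Matrix.mul_apply, Finset.sum_filter]
        refine Finset.sum_congr rfl fun w _ => ?_
        simp only [compAvg, Matrix.of_apply, degM, Matrix.diagonal_mul]
        split_ifs with hw
        · rw [hconst i w k hw]
        · rw [zero_mul]
    _ = (vol G i)⁻¹ * vol G i * K i k := by
        rw [← Finset.mul_sum, ← Finset.sum_mul, vol, mul_assoc]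
    _ = K i k := by rw [inv_mul_cancel₀ (vol_pos G hG i).ne', one_mul]

def sqrtDegM : Matrix V V ℝ :=
  Matrix.diagonal fun v => √(G.degree v : ℝ)

theorem sqrtDegM_mul_invSqrtDegM (hG : ∀ v, 0 < G.degree v) :
    sqrtDegM G * invSqrtDegM G = 1 := by
  rw [sqrtDegM, invSqrtDegM, Matrix.diagonal_mul_diagonal, ← Matrix.diagonal_one]
  exact congrArg Matrix.diagonal (funext fun v => mul_inv_cancel₀ (sqrt_degree_pos G hG v).ne')

theorem invSqrtDegM_mul_sqrtDegM (hG : ∀ v, 0 < G.degree v) :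
    invSqrtDegM G * sqrtDegM G = 1 := by
  rw [sqrtDegM, invSqrtDegM, Matrix.diagonal_mul_diagonal, ← Matrix.diagonal_one]
  exact congrArg Matrix.diagonal (funext fun v => inv_mul_cancel₀ (sqrt_degree_pos G hG v).ne')

theorem sqrtDegM_mul_self : sqrtDegM G * sqrtDegM G = degM G := by
  rw [sqrtDegM, degM, Matrix.diagonal_mul_diagonal]
  exact congrArg Matrix.diagonal (funext fun v => Real.mul_self_sqrt (Nat.cast_nonneg _))

theorem sqrtDegM_mul_normLapM_mul (hG : ∀ v, 0 < G.degree v) :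
    sqrtDegM G * normLapM G * sqrtDegM G = lapM G := by
  simp only [normLapM, ← Matrix.mul_assoc, sqrtDegM_mul_invSqrtDegM G hG, Matrix.one_mul]
  rw [Matrix.mul_assoc, invSqrtDegM_mul_sqrtDegM G hG, Matrix.mul_one]

/-- The orthogonal projection onto `ker L̂`, which is spanned by the vectors `D^{1/2} 1_C` for the
connected components `C`. -/
def normLapKerProj : Matrix V V ℝ :=
  sqrtDegM G * compAvg G * sqrtDegM G

theorem normLapKerProj_apply (u v : V) :
    normLapKerProj G u v = √(G.degree u : ℝ) * compAvg G u v * √(G.degree v : ℝ) := by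
  rw [normLapKerProj, sqrtDegM, Matrix.mul_diagonal, Matrix.diagonal_mul]

theorem normLapKerProj_apply_eq_zero_iff (hG : ∀ v, 0 < G.degree v) (u v : V) :
    normLapKerProj G u v = 0 ↔ ¬ G.Reachable u v := by
  have hu := (sqrt_degree_pos G hG u).ne'
  have hv := (sqrt_degree_pos G hG v).ne'
  have hvol := (vol_pos G hG u).ne'
  rw [normLapKerProj_apply]
  by_cases h : G.Reachable u v <;> simp [compAvg, h, hu, hv, hvol]

theorem normLapKerProj_transpose : (normLapKerProj G)ᵀ = normLapKerProj G := by
  rw [normLapKerProj, Matrix.transpose_mul, Matrix.transpose_mul, compAvg_transpose, sqrtDegM,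
    Matrix.diagonal_transpose, Matrix.mul_assoc]

theorem normLapM_mul_normLapKerProj (hG : ∀ v, 0 < G.degree v) :
    normLapM G * normLapKerProj G = 0 := by
  simp only [normLapM, normLapKerProj, ← Matrix.mul_assoc]
  rw [Matrix.mul_assoc _ (invSqrtDegM G), invSqrtDegM_mul_sqrtDegM G hG, Matrix.mul_one,
    Matrix.mul_assoc (invSqrtDegM G), lapM_mul_compAvg, Matrix.mul_zero, Matrix.zero_mul]

theorem normLapKerProj_mul_of_normLapM_mul (hG : ∀ v, 0 < G.degree v) {N : Matrix V V ℝ}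
    (hN : normLapM G * N = 0) : normLapKerProj G * N = N := by
  have hN' : N = sqrtDegM G * (invSqrtDegM G * N) := by
    rw [← Matrix.mul_assoc, sqrtDegM_mul_invSqrtDegM G hG, Matrix.one_mul]
  have hK : lapM G * (invSqrtDegM G * N) = 0 :=
    calc lapM G * (invSqrtDegM G * N) = sqrtDegM G * (normLapM G * N) := by
          simp only [normLapM, ← Matrix.mul_assoc]
          rw [sqrtDegM_mul_invSqrtDegM G hG, Matrix.one_mul]
      _ = 0 := by rw [hN, Matrix.mul_zero]
  calc normLapKerProj G * N
      = sqrtDegM G * (compAvg G * (degM G * (invSqrtDegM G * N))) := by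
        rw [← sqrtDegM_mul_self, normLapKerProj]
        conv_lhs => rw [hN']
        simp only [Matrix.mul_assoc]
    _ = N := by rw [compAvg_mul_degM_mul G hG hK, ← hN']

variable {Λ : Finset ℝ} {P : ℝ → Matrix V V ℝ}

/-- Both are symmetric and each fixes the range of the other. -/
theorem kerProj_eq_normLapKerProj (hG : ∀ v, 0 < G.degree v)
    (hP : IsSpectralDecomp (normLapM G) Λ P) : kerProj Λ P = normLapKerProj G :=
  calc kerProj Λ P = (normLapKerProj G * kerProj Λ P)ᵀ := by
        rw [normLapKerProj_mul_of_normLapM_mul G hG hP.mul_kerProj, kerProj,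
          hP.specFun_transpose]
    _ = kerProj Λ P * normLapKerProj G := by
        rw [Matrix.transpose_mul, normLapKerProj_transpose, kerProj, hP.specFun_transpose]
    _ = normLapKerProj G :=
        hP.kerProj_mul_of_mul_eq_zero (normLapM_mul_normLapKerProj G hG)

theorem lapM_mul_pinv_conj (hG : ∀ v, 0 < G.degree v)
    (hP : IsSpectralDecomp (normLapM G) Λ P) :
    lapM G * (invSqrtDegM G * pinv Λ P * invSqrtDegM G) = 1 - degM G * compAvg G := by
  calc lapM G * (invSqrtDegM G * pinv Λ P * invSqrtDegM G)
      = sqrtDegM G * (normLapM G * pinv Λ P) * invSqrtDegM G := by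
        rw [← sqrtDegM_mul_normLapM_mul G hG]
        simp only [Matrix.mul_assoc]
        rw [← Matrix.mul_assoc (sqrtDegM G) (invSqrtDegM G), sqrtDegM_mul_invSqrtDegM G hG,
          Matrix.one_mul]
    _ = 1 - degM G * compAvg G := by
        rw [hP.mul_pinv, kerProj_eq_normLapKerProj G hG hP, normLapKerProj, Matrix.mul_sub,
          Matrix.sub_mul, Matrix.mul_one, sqrtDegM_mul_invSqrtDegM G hG, ← sqrtDegM_mul_self]
        simp only [Matrix.mul_assoc]
        rw [sqrtDegM_mul_invSqrtDegM G hG, Matrix.mul_one]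

theorem rdOf_eq_of_reachable (hG : ∀ v, 0 < G.degree v)
    (hP : IsSpectralDecomp (normLapM G) Λ P) {X : Matrix V V ℝ}
    (hX : IsMoorePenrose (lapM G) X) {u v : V} (h : G.Reachable u v) :
    rdOf G X u v = ((pinv Λ P u u / G.degree u + pinv Λ P v v / G.degree v
      - 2 * pinv Λ P u v / √((G.degree u : ℝ) * G.degree v) : ℝ) : WithTop ℝ) := by
  set Z := invSqrtDegM G * pinv Λ P * invSqrtDegM G
  have hw :
      lapM G *ᵥ (Z *ᵥ (Pi.single u 1 - Pi.single v 1)) = Pi.single u 1 - Pi.single v 1 := by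
    rw [Matrix.mulVec_mulVec, lapM_mul_pinv_conj G hG hP, Matrix.sub_mulVec, Matrix.one_mulVec,
      ← Matrix.mulVec_mulVec, compAvg_mulVec_single_sub G h, Matrix.mulVec_zero, sub_zero]
  have hZ : Zᵀ = Z := by
    simp only [Z, Matrix.transpose_mul, invSqrtDegM, Matrix.diagonal_transpose, pinv,
      hP.specFun_transpose, Matrix.mul_assoc]
  have hquad := dotProduct_mulVec_eq_of_mul_mul_eq (lapM_transpose G) hX.1 hw
  rw [dotProduct_single_sub_mulVec (hX.transpose_eq (lapM_transpose G)),
    dotProduct_single_sub_mulVec hZ] at hquad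
  rw [rdOf, if_pos h, hquad]
  congr 1
  have hu := (sqrt_degree_pos G hG u).ne'
  have hv := (sqrt_degree_pos G hG v).ne'
  have hdu := Real.sq_sqrt (Nat.cast_nonneg (α := ℝ) (G.degree u))
  have hdv := Real.sq_sqrt (Nat.cast_nonneg (α := ℝ) (G.degree v))
  simp only [Z, invSqrtDegM, Matrix.mul_diagonal, Matrix.diagonal_mul,
    Real.sqrt_mul (Nat.cast_nonneg _)]
  generalize √(G.degree u : ℝ) = a at hu hdu ⊢
  generalize √(G.degree v : ℝ) = b at hv hdv ⊢
  rw [← hdu, ← hdv]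
  field_simp

end Graph
section Readout

/-- `specEval id` and `specEval 1` read `L̂(u,v)` and `I(u,v)` off `𝒫(u,v)`, so this counts the
neighbours of `u`. -/
def degOfColor (c : Color (Multiset (ℝ × ℝ)) 1) : ℝ :=
  (c.2.filter fun q => specEval id q.2 ≠ 0 ∧ specEval 1 q.2 = 0).card

/-- Reads `L̂⁺(u,u)` off the unique `v` with `I(u,v) = 1`. -/
def diagOfColor (c : Color (Multiset (ℝ × ℝ)) 1) : ℝ :=
  ((c.2.filter fun q => specEval 1 q.2 = 1).map fun q => specEval (·⁻¹) q.2).sum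

def rdOfColors (c d : Color (Multiset (ℝ × ℝ)) 1) (m : Multiset (ℝ × ℝ)) : WithTop ℝ :=
  if specEval (fun x => if x = 0 then 1 else 0) m = 0 then ⊤
  else ((diagOfColor c / degOfColor c + diagOfColor d / degOfColor d
    - 2 * specEval (·⁻¹) m / √(degOfColor c * degOfColor d) : ℝ) : WithTop ℝ)

variable {V : Type*} [Fintype V] (G : SimpleGraph V) {Λ : Finset ℝ} {P : ℝ → Matrix V V ℝ}

theorem filter_colorFn_one_snd {α : Type} (f : V → V → α) (u : V)
    (p : Color α 0 × α → Prop) [DecidablePred p] :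
    (colorFn f 1 u).2.filter p = (Finset.univ.filter fun v => p (colorFn f 0 v, f u v)).val.map
      fun v => (colorFn f 0 v, f u v) := by
  rw [colorFn_succ, Multiset.filter_map, Finset.filter_val]
  rfl

theorem degOfColor_colorFn (hG : ∀ v, 0 < G.degree v)
    (hP : IsSpectralDecomp (normLapM G) Λ P) (u : V) :
    degOfColor (colorFn (projInv Λ P) 1 u) = G.degree u := by
  have hadj : ∀ v, (specEval id (projInv Λ P u v) ≠ 0 ∧ specEval 1 (projInv Λ P u v) = 0)
      ↔ G.Adj u v := by
    intro v
    rw [specEval_projInv, specEval_projInv, hP.specFun_id, hP.specFun_one, Matrix.one_apply]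
    by_cases huv : u = v
    · simp [huv]
    · simp [huv, normLapM_apply_ne_zero_iff G hG huv]
  rw [degOfColor, filter_colorFn_one_snd, Multiset.card_map, Finset.card_val,
    Finset.filter_congr fun v _ => hadj v, ← G.neighborFinset_eq_filter,
    G.card_neighborFinset_eq_degree]

theorem diagOfColor_colorFn (hP : IsSpectralDecomp (normLapM G) Λ P) (u : V) :
    diagOfColor (colorFn (projInv Λ P) 1 u) = pinv Λ P u u := by
  have hdiag : ∀ v, specEval 1 (projInv Λ P u v) = 1 ↔ u = v := by
    intro v
    rw [specEval_projInv, hP.specFun_one, Matrix.one_apply]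
    by_cases huv : u = v <;> simp [huv]
  rw [diagOfColor, filter_colorFn_one_snd, Finset.filter_congr fun v _ => hdiag v,
    Finset.filter_eq, if_pos (Finset.mem_univ u)]
  simp only [Finset.singleton_val, Multiset.map_singleton, Multiset.sum_singleton]
  exact specEval_projInv (·⁻¹) u u

theorem rdOf_eq_rdOfColors (hG : ∀ v, 0 < G.degree v)
    (hP : IsSpectralDecomp (normLapM G) Λ P) {X : Matrix V V ℝ}
    (hX : IsMoorePenrose (lapM G) X) (u v : V) :
    rdOf G X u v = rdOfColors (colorFn (projInv Λ P) 1 u) (colorFn (projInv Λ P) 1 v)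
      (projInv Λ P u v) := by
  have hker : specEval (fun x => if x = 0 then 1 else 0) (projInv Λ P u v)
      = normLapKerProj G u v := by
    rw [specEval_projInv, ← kerProj_eq_normLapKerProj G hG hP]
    rfl
  rw [rdOfColors, hker, degOfColor_colorFn G hG hP, degOfColor_colorFn G hG hP,
    diagOfColor_colorFn G hP, diagOfColor_colorFn G hP]
  by_cases h : G.Reachable u v
  · rw [rdOf_eq_of_reachable G hG hP hX h,
      if_neg ((normLapKerProj_apply_eq_zero_iff G hG u v).not_left.2 h), specEval_projInv]
    rfl
  · rw [rdOf, if_neg h, if_pos ((normLapKerProj_apply_eq_zero_iff G hG u v).2 h)]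

end Readout

/-- If `G` and `H` are EPWL-indistinguishable with
respect to the normalized Laplacian, then they are
GD-WL-indistinguishable with respect to the resistance distance. -/
theorem epwl_bounds_gdwl_rd {V W : Type*} [Fintype V] [Fintype W]
    (G : SimpleGraph V) (H : SimpleGraph W)
    (hG : ∀ v, 0 < G.degree v) (hH : ∀ w, 0 < H.degree w)
    (ΛG : Finset ℝ) (PG : ℝ → Matrix V V ℝ)
    (hPG : IsSpectralDecomp (normLapM G) ΛG PG)
    (ΛH : Finset ℝ) (PH : ℝ → Matrix W W ℝ)
    (hPH : IsSpectralDecomp (normLapM H) ΛH PH)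
    (XG : Matrix V V ℝ) (hXG : IsMoorePenrose (lapM G) XG)
    (XH : Matrix W W ℝ) (hXH : IsMoorePenrose (lapM H) XH)
    (hEP : NodeIndist (projInv ΛG PG) (projInv ΛH PH)) :
    NodeIndist (rdOf G XG) (rdOf H XH) :=
  NodeIndist.of_feature_eq rdOfColors (rdOf_eq_rdOfColors G hG hPG hXG)
    (rdOf_eq_rdOfColors H hH hPH hXH) hEP

end EPWL
end
end
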